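/- arXiv:2510.10590 — 5 statements merged into one kernel-verified Lean document; each statement's English description precedes it below -/
import Mathlib

section
/- Let r ≥ s ≥ 2 be integers and let F be an s-uniform hypergraph. Then π(F̂^r) ≤ π(F), where F̂^r is the r-suspension of F. Consequently, π(F̂^{r₂}) ≤ π(F̂^{r₁}) for all integers r₂ ≥ r₁ ≥ s. -/
open Filter

/-- The degree of a vertex in a hypergraph given as a finite set of edges. -/
def hypDegree {V : Type*} [DecidableEq V] (F : Finset (Finset V)) (v : V) : ℕ :=
  (F.filter fun e => v ∈ e).card

/-- `H` contains a copy of `F`: a map injective on the vertex support of `F`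
sending every edge of `F` to an edge of `H`. -/
def HasCopy {V W : Type*} [DecidableEq V] (H : Finset (Finset V))
    (F : Finset (Finset W)) : Prop :=
  ∃ φ : W → V, Set.InjOn φ (⋃ e ∈ F, (e : Set W)) ∧ ∀ e ∈ F, e.image φ ∈ H

/-- `F` is isomorphic to `G` (as edge sets; isolated vertices are irrelevant). -/
def IsIsoTo {V W : Type*} [DecidableEq V] (F : Finset (Finset W))
    (G : Finset (Finset V)) : Prop :=
  ∃ φ : W → V, Set.InjOn φ (⋃ e ∈ F, (e : Set W)) ∧ F.image (fun e => e.image φ) = G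

open scoped Classical in
/-- The Turán number `ex(n, F)`: the maximum number of edges of an `F`-free
`r`-uniform hypergraph on `n` vertices. -/
noncomputable def exNum (r n : ℕ) {m : ℕ} (F : Finset (Finset (Fin m))) : ℕ :=
  ((Finset.univ : Finset (Finset (Finset (Fin n)))).filter fun H =>
    (∀ e ∈ H, e.card = r) ∧ ¬ HasCopy H F).sup Finset.card

/-- The Turán density `π(F) = lim_{n → ∞} ex(n,F) / C(n,r)` (the limit exists). -/
noncomputable def turanDensity (r : ℕ) {m : ℕ} (F : Finset (Finset (Fin m))) : ℝ :=
  limUnder atTop fun n : ℕ => (exNum r n F : ℝ) / (n.choose r : ℝ)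

/-- `γ(r)`: the maximum Turán density of an `r`-uniform hypergraph with exactly
three edges. -/
noncomputable def gammaT (r : ℕ) : ℝ :=
  sSup {x : ℝ | ∃ (m : ℕ) (F : Finset (Finset (Fin m))),
    (∀ e ∈ F, e.card = r) ∧ F.card = 3 ∧ turanDensity r F = x}

/-- The expanded triangle `T_{2k}` on `3k` vertices: three pairwise disjoint
`k`-sets `S 0, S 1, S 2`, with edges `S 0 ∪ S 1`, `S 1 ∪ S 2`, `S 2 ∪ S 0`. -/
def expTriangle (k : ℕ) : Finset (Finset (Fin (3 * k))) :=
  let S : ℕ → Finset (Fin (3 * k)) :=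
    fun a => Finset.univ.filter fun v => a * k ≤ v.val ∧ v.val < (a + 1) * k
  {S 0 ∪ S 1, S 1 ∪ S 2, S 2 ∪ S 0}

/-- The suspension of a hypergraph: add the same set of `t` new cone vertices
to every edge.  For an `s`-graph `F`, the `r`-suspension `F̂^r` is `suspend (r - s) F`. -/
def suspend {m : ℕ} (t : ℕ) (F : Finset (Finset (Fin m))) :
    Finset (Finset (Fin (m + t))) :=
  F.image fun e =>
    e.image (Fin.castAdd t) ∪ Finset.univ.filter fun v : Fin (m + t) => m ≤ v.val


set_option linter.unusedSectionVars false
set_option linter.unusedVariables false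
set_option maxHeartbeats 1000000

namespace SuspAux

variable {V W X : Type*} [DecidableEq V] [DecidableEq W] [DecidableEq X]

variable {V W X : Type*} [DecidableEq V] [DecidableEq W] [DecidableEq X]

lemma hasCopy_mono {H H' : Finset (Finset V)} {F : Finset (Finset X)}
    (hsub : H ⊆ H') (h : HasCopy H F) : HasCopy H' F := by
  obtain ⟨φ, h1, h2⟩ := h
  exact ⟨φ, h1, fun e he => hsub (h2 e he)⟩

lemma mem_supp {F : Finset (Finset X)} {x : X} :
    x ∈ (⋃ e ∈ F, (e : Set X)) ↔ ∃ e ∈ F, x ∈ e := by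
  simp

lemma retract_edge {G : Finset (Finset V)} {ψ : V → W} {g : W → V}
    (hg : ∀ x ∈ (⋃ e ∈ G, (e : Set V)), g (ψ x) = x)
    {e : Finset V} (he : e ∈ G) : (e.image ψ).image g = e := by
  rw [Finset.image_image]
  have : ∀ x ∈ e, (g ∘ ψ) x = id x := fun x hx =>
    hg x (mem_supp.mpr ⟨e, he, hx⟩)
  rw [Finset.image_congr this, Finset.image_id]

lemma hasCopy_of_image {G : Finset (Finset V)} {F : Finset (Finset X)}
    {ψ : V → W} {g : W → V}
    (hg : ∀ x ∈ (⋃ e ∈ G, (e : Set V)), g (ψ x) = x)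
    (h : HasCopy (G.image fun e => e.image ψ) F) : HasCopy G F := by
  obtain ⟨φ, hinj, hmap⟩ := h
  have hmem : ∀ x ∈ (⋃ e ∈ F, (e : Set X)), ∃ u, (u ∈ ⋃ e ∈ G, (e : Set V)) ∧ φ x = ψ u := by
    intro x hx
    obtain ⟨e, he, hxe⟩ := mem_supp.mp hx
    have := hmap e he
    obtain ⟨e₀, he₀, heq⟩ := Finset.mem_image.mp this
    have : φ x ∈ e₀.image ψ := heq ▸ Finset.mem_image_of_mem φ hxe
    obtain ⟨u, hu, hux⟩ := Finset.mem_image.mp this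
    exact ⟨u, mem_supp.mpr ⟨e₀, he₀, hu⟩, hux.symm⟩
  refine ⟨g ∘ φ, ?_, ?_⟩
  · intro x hx y hy hxy
    obtain ⟨u, hu, hux⟩ := hmem x hx
    obtain ⟨u', hu', huy⟩ := hmem y hy
    simp only [Function.comp_apply, hux, huy, hg u hu, hg u' hu'] at hxy
    exact hinj hx hy (by rw [hux, huy, hxy])
  · intro e he
    have := hmap e he
    obtain ⟨e₀, he₀, heq⟩ := Finset.mem_image.mp this
    have : e.image (g ∘ φ) = (e.image φ).image g := by rw [Finset.image_image]
    rw [this, ← heq, retract_edge hg he₀]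
    exact he₀

lemma card_image_edges {G : Finset (Finset V)} {ψ : V → W} {g : W → V}
    (hg : ∀ x ∈ (⋃ e ∈ G, (e : Set V)), g (ψ x) = x) :
    (G.image fun e => e.image ψ).card = G.card := by
  apply Finset.card_image_of_injOn
  intro e₁ h₁ e₂ h₂ h
  have h₁' := Finset.mem_coe.mp h₁
  have h₂' := Finset.mem_coe.mp h₂
  have := congrArg (Finset.image g) h
  simp only at this
  rwa [retract_edge hg h₁', retract_edge hg h₂'] at this

lemma card_edge_image {G : Finset (Finset V)} {ψ : V → W} {g : W → V}
    (hg : ∀ x ∈ (⋃ e ∈ G, (e : Set V)), g (ψ x) = x)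
    {e : Finset V} (he : e ∈ G) : (e.image ψ).card = e.card := by
  apply Finset.card_image_of_injOn
  intro a ha b hb hab
  have ha' := Finset.mem_coe.mp ha
  have hb' := Finset.mem_coe.mp hb
  rw [← hg a (mem_supp.mpr ⟨e, he, ha'⟩), ← hg b (mem_supp.mpr ⟨e, he, hb'⟩), hab]
lemma exists_retract {n k : ℕ} (U : Finset (Fin n)) (hU : U.card ≤ k) (hk : 0 < k)
    (hkn : k ≤ n) :
    ∃ (ψ : Fin n → Fin k) (g : Fin k → Fin n), ∀ x ∈ U, g (ψ x) = x := by
  classical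
  have hn : 0 < n := hk.trans_le hkn
  let σ := U.orderIsoOfFin (rfl : U.card = U.card)
  refine ⟨fun x => if h : x ∈ U then Fin.castLE hU (σ.symm ⟨x, h⟩) else ⟨0, hk⟩,
      fun y => if h : y.val < U.card then (σ ⟨y.val, h⟩ : Fin n) else ⟨0, hn⟩, ?_⟩
  intro x hx
  have h2 : (Fin.castLE hU (σ.symm ⟨x, hx⟩)).val < U.card := (σ.symm ⟨x, hx⟩).isLt
  simp only [dif_pos hx, dif_pos h2]
  have h3 : (⟨(Fin.castLE hU (σ.symm ⟨x, hx⟩)).val, h2⟩ : Fin U.card) = σ.symm ⟨x, hx⟩ :=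
    Fin.ext rfl
  rw [h3, OrderIso.apply_symm_apply]

lemma le_exNum {r n mF : ℕ} {F : Finset (Finset (Fin mF))} {H : Finset (Finset (Fin n))}
    (h1 : ∀ e ∈ H, e.card = r) (h2 : ¬ HasCopy H F) : H.card ≤ exNum r n F := by
  classical
  unfold exNum
  exact Finset.le_sup (Finset.mem_filter.mpr ⟨Finset.mem_univ _, h1, h2⟩)

lemma exNum_exists {r n mF : ℕ} (F : Finset (Finset (Fin mF))) :
    exNum r n F = 0 ∨ ∃ H : Finset (Finset (Fin n)),
      (∀ e ∈ H, e.card = r) ∧ ¬ HasCopy H F ∧ H.card = exNum r n F := by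
  classical
  unfold exNum
  rcases Finset.eq_empty_or_nonempty
      ((Finset.univ : Finset (Finset (Finset (Fin n)))).filter fun H =>
        (∀ e ∈ H, e.card = r) ∧ ¬ HasCopy H F) with h | h
  · left; rw [h]; rfl
  · right
    obtain ⟨H, hH, hsup⟩ := Finset.exists_mem_eq_sup _ h Finset.card
    rw [Finset.mem_filter] at hH
    exact ⟨H, hH.2.1, hH.2.2, hsup.symm⟩

lemma key_mono {s n mF : ℕ} (F : Finset (Finset (Fin mF))) (hs : 0 < s) (hsn : s ≤ n)
    (H : Finset (Finset (Fin (n+1)))) (hcard : ∀ e ∈ H, e.card = s)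
    (hfree : ¬ HasCopy H F) :
    (n + 1 - s) * H.card ≤ (n + 1) * exNum s n F := by
  classical
  have hv : ∀ v : Fin (n+1), (H.filter fun e => v ∉ e).card ≤ exNum s n F := by
    intro v
    have hUcard : ({v}ᶜ : Finset (Fin (n+1))).card = n := by
      rw [Finset.card_compl]; simp
    obtain ⟨ψ, g, hg⟩ := exists_retract ({v}ᶜ : Finset (Fin (n+1))) (le_of_eq hUcard)
      (hs.trans_le hsn) (Nat.le_succ n)
    have hg' : ∀ x ∈ (⋃ e ∈ (H.filter fun e => v ∉ e), (e : Set (Fin (n+1)))), g (ψ x) = x := by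
      intro x hx
      obtain ⟨e, he, hxe⟩ := mem_supp.mp hx
      have hv' : v ∉ e := (Finset.mem_filter.mp he).2
      apply hg
      simp only [Finset.mem_compl, Finset.mem_singleton]
      rintro rfl; exact hv' hxe
    have hle : ((H.filter fun e => v ∉ e).image fun e => e.image ψ).card ≤ exNum s n F := by
      apply le_exNum
      · intro e' he'
        obtain ⟨e, he, rfl⟩ := Finset.mem_image.mp he'
        rw [card_edge_image hg' he]
        exact hcard e (Finset.mem_filter.mp he).1
      · intro hcopy
        exact hfree (hasCopy_mono (Finset.filter_subset _ _) (hasCopy_of_image hg' hcopy))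
    rwa [card_image_edges hg'] at hle
  have hsum : ∑ v : Fin (n+1), (H.filter fun e => v ∉ e).card = (n + 1 - s) * H.card := by
    have h1 : ∀ v : Fin (n+1), (H.filter fun e => v ∉ e).card
        = ∑ e ∈ H, if v ∉ e then 1 else 0 := fun v => Finset.card_filter _ _
    simp only [h1]
    rw [Finset.sum_comm]
    have h2 : ∀ e ∈ H, (∑ v : Fin (n+1), if v ∉ e then 1 else 0) = n + 1 - s := by
      intro e he
      rw [← Finset.card_filter]
      have : Finset.univ.filter (fun v : Fin (n+1) => v ∉ e) = eᶜ := by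
        ext x; simp
      rw [this, Finset.card_compl, hcard e he, Fintype.card_fin]
    rw [Finset.sum_congr rfl h2, Finset.sum_const, smul_eq_mul, mul_comm]
  calc (n + 1 - s) * H.card = ∑ v : Fin (n+1), (H.filter fun e => v ∉ e).card := hsum.symm
    _ ≤ ∑ _v : Fin (n+1), exNum s n F := Finset.sum_le_sum fun v _ => hv v
    _ = (n + 1) * exNum s n F := by rw [Finset.sum_const, smul_eq_mul, Finset.card_univ,
        Fintype.card_fin]

lemma exNum_step {s n mF : ℕ} (F : Finset (Finset (Fin mF))) (hs : 0 < s) (hsn : s ≤ n) :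
    (n + 1 - s) * exNum s (n+1) F ≤ (n + 1) * exNum s n F := by
  rcases exNum_exists (r := s) (n := n+1) F with h | ⟨H, h1, h2, h3⟩
  · rw [h]; simp
  · rw [← h3]; exact key_mono F hs hsn H h1 h2

lemma choose_identity (n s t : ℕ) (h : s + t ≤ n) :
    n.choose t * (n - t).choose s = n.choose (s + t) * (s + t).choose t := by
  have ht : t ≤ n := by omega
  have hs' : s ≤ n - t := by omega
  have h1 : (n - t).choose s * (s.factorial * (n - t - s).factorial) = (n - t).factorial := by
    have := Nat.choose_mul_factorial_mul_factorial hs'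
    calc (n - t).choose s * (s.factorial * (n - t - s).factorial)
        = (n - t).choose s * s.factorial * (n - t - s).factorial := by ring
      _ = (n - t).factorial := this
  have h2 : n.choose t * (t.factorial * (n - t).factorial) = n.factorial := by
    have := Nat.choose_mul_factorial_mul_factorial ht
    calc n.choose t * (t.factorial * (n - t).factorial)
        = n.choose t * t.factorial * (n - t).factorial := by ring
      _ = n.factorial := this
  have h3 : (s + t).choose t * (t.factorial * s.factorial) = (s + t).factorial := by
    have := Nat.choose_mul_factorial_mul_factorial (Nat.le_add_left t s)
    have hst : s + t - t = s := by omega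
    rw [hst] at this
    calc (s + t).choose t * (t.factorial * s.factorial)
        = (s + t).choose t * t.factorial * s.factorial := by ring
      _ = (s + t).factorial := this
  have h4 : n.choose (s + t) * ((s + t).factorial * (n - t - s).factorial) = n.factorial := by
    have := Nat.choose_mul_factorial_mul_factorial h
    have hst : n - (s + t) = n - t - s := by omega
    rw [hst] at this
    calc n.choose (s + t) * ((s + t).factorial * (n - t - s).factorial)
        = n.choose (s + t) * (s + t).factorial * (n - t - s).factorial := by ring
      _ = n.factorial := this
  have hpos : 0 < t.factorial * s.factorial * (n - t - s).factorial :=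
    Nat.mul_pos (Nat.mul_pos t.factorial_pos s.factorial_pos) (n - t - s).factorial_pos
  apply Nat.eq_of_mul_eq_mul_right hpos
  calc n.choose t * (n - t).choose s * (t.factorial * s.factorial * (n - t - s).factorial)
      = n.choose t * (t.factorial * ((n - t).choose s * (s.factorial * (n - t - s).factorial)))
        := by ring
    _ = n.choose t * (t.factorial * (n - t).factorial) := by rw [h1]
    _ = n.factorial := h2
    _ = n.choose (s + t) * ((s + t).factorial * (n - t - s).factorial) := h4.symm
    _ = n.choose (s + t) * (((s + t).choose t * (t.factorial * s.factorial)) * (n - t - s).factorial)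
        := by rw [h3]
    _ = n.choose (s + t) * (s + t).choose t * (t.factorial * s.factorial * (n - t - s).factorial)
        := by ring

lemma linkFree {t n m' : ℕ} {F : Finset (Finset (Fin m'))} {H : Finset (Finset (Fin n))}
    (hfree : ¬ HasCopy H (suspend t F)) (C : Finset (Fin n)) (hC : C.card = t) :
    ¬ HasCopy ((H.filter fun e => C ⊆ e).image fun e => e \ C) F := by
  classical
  intro hcopy
  obtain ⟨φ, hinj, hmap⟩ := hcopy
  apply hfree
  set L := (H.filter fun e => C ⊆ e).image fun e => e \ C with hLdef
  have hout : ∀ u, u ∈ (⋃ e ∈ F, (e : Set (Fin m'))) → φ u ∉ C := by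
    intro u hu
    obtain ⟨e, he, hue⟩ := mem_supp.mp hu
    obtain ⟨e₀, he₀, heq⟩ := Finset.mem_image.mp (hmap e he)
    have : φ u ∈ e₀ \ C := heq ▸ Finset.mem_image_of_mem φ hue
    exact (Finset.mem_sdiff.mp this).2
  set χ : Fin t → Fin m' → Fin n := fun j _ => C.orderEmbOfFin hC j with hχdef
  set φ' : Fin (m' + t) → Fin n := fun x =>
    if h : x.val < m' then φ ⟨x.val, h⟩
    else C.orderEmbOfFin hC ⟨x.val - m', by have := x.isLt; omega⟩ with hφ'def
  have hsupp : ∀ (x : Fin (m' + t)) (hxm : x.val < m'),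
      x ∈ (⋃ E ∈ suspend t F, (E : Set (Fin (m' + t)))) →
      (⟨x.val, hxm⟩ : Fin m') ∈ (⋃ e ∈ F, (e : Set (Fin m'))) := by
    intro x hxm hx
    obtain ⟨E, hE, hxE⟩ := mem_supp.mp hx
    simp only [suspend, Finset.mem_image] at hE
    obtain ⟨e, he, rfl⟩ := hE
    rcases Finset.mem_union.mp hxE with h | h
    · obtain ⟨u, hu, rfl⟩ := Finset.mem_image.mp h
      have : (⟨(Fin.castAdd t u).val, hxm⟩ : Fin m') = u := Fin.ext rfl
      rw [this]
      exact mem_supp.mpr ⟨e, he, hu⟩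
    · exfalso
      have := (Finset.mem_filter.mp h).2
      omega
  refine ⟨φ', ?_, ?_⟩
  · intro x hx y hy hxy
    by_cases hxm : x.val < m' <;> by_cases hym : y.val < m'
    · simp only [hφ'def, dif_pos hxm, dif_pos hym] at hxy
      have := hinj (hsupp x hxm hx) (hsupp y hym hy) hxy
      have hval := congrArg Fin.val this
      exact Fin.ext hval
    · exfalso
      simp only [hφ'def, dif_pos hxm, dif_neg hym] at hxy
      exact hout _ (hsupp x hxm hx) (hxy ▸ Finset.orderEmbOfFin_mem C hC _)
    · exfalso
      simp only [hφ'def, dif_neg hxm, dif_pos hym] at hxy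
      exact hout _ (hsupp y hym hy) (hxy ▸ Finset.orderEmbOfFin_mem C hC _)
    · simp only [hφ'def, dif_neg hxm, dif_neg hym] at hxy
      have h' : x.val - m' = y.val - m' :=
        congrArg Fin.val ((C.orderEmbOfFin hC).injective hxy)
      have hx' := x.isLt
      have hy' := y.isLt
      exact Fin.ext (by omega)
  · intro E hE
    simp only [suspend, Finset.mem_image] at hE
    obtain ⟨e, he, rfl⟩ := hE
    rw [Finset.image_union, Finset.image_image]
    have him : e.image (φ' ∘ Fin.castAdd t) = e.image φ := by
      apply Finset.image_congr
      intro u _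
      simp only [Function.comp_apply, hφ'def]
      rw [dif_pos (show ((Fin.castAdd t u) : Fin (m' + t)).val < m' from u.isLt)]
      exact congrArg φ (Fin.ext rfl)
    have hcone : (Finset.univ.filter fun v : Fin (m' + t) => m' ≤ v.val).image φ' = C := by
      ext y
      simp only [Finset.mem_image, Finset.mem_filter, Finset.mem_univ, true_and]
      constructor
      · rintro ⟨v, hv, rfl⟩
        simp only [hφ'def]
        rw [dif_neg (by omega)]
        exact Finset.orderEmbOfFin_mem C hC _
      · intro hy
        have : ∃ j : Fin t, C.orderEmbOfFin hC j = y := by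
          have hr := Finset.range_orderEmbOfFin C hC
          have : y ∈ Set.range (C.orderEmbOfFin hC) := by
            rw [hr]; exact hy
          exact this
        obtain ⟨j, hj⟩ := this
        refine ⟨⟨m' + j.val, by have := j.isLt; omega⟩, by simp, ?_⟩
        simp only [hφ'def]
        rw [dif_neg (by simp)]
        have : (⟨m' + j.val - m', by have := j.isLt; omega⟩ : Fin t) = j :=
          Fin.ext (show m' + j.val - m' = j.val by omega)
        rw [this]
        exact hj
    rw [him, hcone]
    obtain ⟨e₀, he₀, heq⟩ := Finset.mem_image.mp (hmap e he)
    have hC₀ : C ⊆ e₀ := (Finset.mem_filter.mp he₀).2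
    rw [← heq, Finset.sdiff_union_of_subset hC₀]
    exact (Finset.mem_filter.mp he₀).1

lemma key_susp {s t n m' : ℕ} (F : Finset (Finset (Fin m'))) (hs : 0 < s)
    (hstn : s + t ≤ n) (H : Finset (Finset (Fin n)))
    (hcard : ∀ e ∈ H, e.card = s + t) (hfree : ¬ HasCopy H (suspend t F)) :
    (s + t).choose t * H.card ≤ n.choose t * exNum s (n - t) F := by
  classical
  have hdc : (s + t).choose t * H.card
      = ∑ C ∈ Finset.powersetCard t (Finset.univ : Finset (Fin n)),
          (H.filter fun e => C ⊆ e).card := by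
    have h1 : ∀ C : Finset (Fin n), (H.filter fun e => C ⊆ e).card
        = ∑ e ∈ H, if C ⊆ e then 1 else 0 := fun C => Finset.card_filter _ _
    simp only [h1]
    rw [Finset.sum_comm]
    have h2 : ∀ e ∈ H,
        (∑ C ∈ Finset.powersetCard t (Finset.univ : Finset (Fin n)),
          if C ⊆ e then 1 else 0) = (s + t).choose t := by
      intro e he
      rw [← Finset.card_filter]
      have heq : (Finset.powersetCard t (Finset.univ : Finset (Fin n))).filter
          (fun C => C ⊆ e) = Finset.powersetCard t e := by
        ext C
        simp only [Finset.mem_filter, Finset.mem_powersetCard, Finset.subset_univ, true_and]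
        tauto
      rw [heq, Finset.card_powersetCard, hcard e he]
    rw [Finset.sum_congr rfl h2, Finset.sum_const, smul_eq_mul, mul_comm]
  have hCbound : ∀ C ∈ Finset.powersetCard t (Finset.univ : Finset (Fin n)),
      (H.filter fun e => C ⊆ e).card ≤ exNum s (n - t) F := by
    intro C hCmem
    have hCt : C.card = t := (Finset.mem_powersetCard.mp hCmem).2
    set L := (H.filter fun e => C ⊆ e).image fun e => e \ C with hLdef
    have hcardL : L.card = (H.filter fun e => C ⊆ e).card := by
      apply Finset.card_image_of_injOn
      intro e₁ h₁ e₂ h₂ h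
      simp only at h
      have h₁' := (Finset.mem_filter.mp (Finset.mem_coe.mp h₁)).2
      have h₂' := (Finset.mem_filter.mp (Finset.mem_coe.mp h₂)).2
      rw [← Finset.sdiff_union_of_subset h₁', ← Finset.sdiff_union_of_subset h₂', h]
    have hLsub : ∀ x, x ∈ (⋃ e ∈ L, (e : Set (Fin n))) → x ∉ C := by
      intro x hx
      obtain ⟨e', he', hxe⟩ := mem_supp.mp hx
      obtain ⟨e, _, rfl⟩ := Finset.mem_image.mp he'
      exact (Finset.mem_sdiff.mp hxe).2
    have hLfree : ¬ HasCopy L F := linkFree hfree C hCt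
    have hUcard : (Cᶜ : Finset (Fin n)).card = n - t := by
      rw [Finset.card_compl, hCt]
      simp
    obtain ⟨ψ, g, hg⟩ := exists_retract (Cᶜ : Finset (Fin n)) (le_of_eq hUcard)
      (by omega) (by omega)
    have hg' : ∀ x ∈ (⋃ e ∈ L, (e : Set (Fin n))), g (ψ x) = x := fun x hx =>
      hg x (Finset.mem_compl.mpr (hLsub x hx))
    have hfinal : (L.image fun e => e.image ψ).card ≤ exNum s (n - t) F := by
      apply le_exNum
      · intro e' he'
        obtain ⟨e, he, rfl⟩ := Finset.mem_image.mp he'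
        rw [card_edge_image hg' he]
        obtain ⟨e₀, he₀, rfl⟩ := Finset.mem_image.mp he
        have hmem := Finset.mem_filter.mp he₀
        rw [Finset.card_sdiff_of_subset hmem.2, hcard e₀ hmem.1, hCt]
        omega
      · intro hcopy
        exact hLfree (hasCopy_of_image hg' hcopy)
    rwa [card_image_edges hg', hcardL] at hfinal
  calc (s + t).choose t * H.card
      = ∑ C ∈ Finset.powersetCard t (Finset.univ : Finset (Fin n)),
          (H.filter fun e => C ⊆ e).card := hdc
    _ ≤ ∑ _C ∈ Finset.powersetCard t (Finset.univ : Finset (Fin n)),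
          exNum s (n - t) F := Finset.sum_le_sum hCbound
    _ = n.choose t * exNum s (n - t) F := by
        rw [Finset.sum_const, smul_eq_mul, Finset.card_powersetCard, Finset.card_univ,
          Fintype.card_fin]

lemma exNum_susp {s t n m' : ℕ} (F : Finset (Finset (Fin m'))) (hs : 0 < s)
    (hstn : s + t ≤ n) :
    (s + t).choose t * exNum (s + t) n (suspend t F) ≤ n.choose t * exNum s (n - t) F := by
  rcases exNum_exists (r := s + t) (n := n) (suspend t F) with h | ⟨H, h1, h2, h3⟩
  · rw [h]; simp
  · rw [← h3]; exact key_susp F hs hstn H h1 h2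

noncomputable def exSeq (r : ℕ) {m : ℕ} (F : Finset (Finset (Fin m))) : ℕ → ℝ :=
  fun n => (exNum r n F : ℝ) / (n.choose r : ℝ)

lemma exSeq_nonneg (r : ℕ) {m : ℕ} (F : Finset (Finset (Fin m))) (n : ℕ) :
    0 ≤ exSeq r F n :=
  div_nonneg (Nat.cast_nonneg _) (Nat.cast_nonneg _)

lemma exSeq_step {s n mF : ℕ} (F : Finset (Finset (Fin mF))) (hs : 0 < s) (hsn : s ≤ n) :
    exSeq s F (n + 1) ≤ exSeq s F n := by
  have hnat := exNum_step F hs hsn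
  have h1 : 0 < (n.choose s : ℝ) := by
    exact_mod_cast Nat.choose_pos hsn
  have h2 : 0 < ((n + 1).choose s : ℝ) := by
    exact_mod_cast Nat.choose_pos (hsn.trans (Nat.le_succ n))
  unfold exSeq
  rw [div_le_div_iff₀ h2 h1]
  have key : exNum s (n+1) F * n.choose s ≤ exNum s n F * (n+1).choose s := by
    have hid : n.choose s * (n + 1) = (n + 1).choose s * (n + 1 - s) :=
      Nat.choose_mul_succ_eq n s
    apply Nat.le_of_mul_le_mul_right ?_ n.succ_pos
    calc exNum s (n+1) F * n.choose s * (n + 1)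
        = exNum s (n+1) F * (n.choose s * (n + 1)) := by ring
      _ = exNum s (n+1) F * ((n + 1).choose s * (n + 1 - s)) := by rw [hid]
      _ = ((n + 1 - s) * exNum s (n+1) F) * (n + 1).choose s := by ring
      _ ≤ ((n + 1) * exNum s n F) * (n + 1).choose s :=
          Nat.mul_le_mul_right _ hnat
      _ = exNum s n F * (n + 1).choose s * (n + 1) := by ring
  exact_mod_cast key

noncomputable def exLim (r : ℕ) {m : ℕ} (F : Finset (Finset (Fin m))) : ℝ :=
  ⨅ k : ℕ, exSeq r F (k + r)

lemma tendsto_exSeq {r m : ℕ} (F : Finset (Finset (Fin m))) (hr : 0 < r) :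
    Tendsto (exSeq r F) atTop (nhds (exLim r F)) := by
  have hanti : Antitone (fun k => exSeq r F (k + r)) := by
    apply antitone_nat_of_succ_le
    intro k
    have := exSeq_step F hr (Nat.le_add_left r k)
    have heq : k + 1 + r = k + r + 1 := by omega
    rw [heq]
    exact this
  have hb : BddBelow (Set.range fun k => exSeq r F (k + r)) := by
    refine ⟨0, ?_⟩
    rintro x ⟨k, rfl⟩
    exact exSeq_nonneg r F _
  have h := tendsto_atTop_ciInf hanti hb
  exact (tendsto_add_atTop_iff_nat r).mp h

lemma turanDensity_eq {r m : ℕ} (F : Finset (Finset (Fin m))) (hr : 0 < r) :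
    turanDensity r F = exLim r F :=
  (tendsto_exSeq F hr).limUnder_eq

lemma main_le {s r m' : ℕ} (F : Finset (Finset (Fin m'))) (hs : 0 < s) (hsr : s ≤ r) :
    turanDensity r (suspend (r - s) F) ≤ turanDensity s F := by
  set t := r - s with ht
  have hst : s + t = r := by omega
  have hr : 0 < r := hs.trans_le hsr
  rw [turanDensity_eq _ hr, turanDensity_eq _ hs]
  refine le_of_tendsto_of_tendsto (tendsto_exSeq (suspend t F) hr)
    ((tendsto_exSeq F hs).comp (tendsto_sub_atTop_nat t)) ?_
  filter_upwards [eventually_ge_atTop r] with n hn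
  have hnat : (s + t).choose t * exNum (s + t) n (suspend t F)
      ≤ n.choose t * exNum s (n - t) F := exNum_susp F hs (by omega)
  rw [hst] at hnat
  have hc1 : 0 < (n.choose r : ℝ) := by exact_mod_cast Nat.choose_pos hn
  have hc2 : 0 < ((n - t).choose s : ℝ) := by
    exact_mod_cast Nat.choose_pos (show s ≤ n - t by omega)
  show (exNum r n (suspend t F) : ℝ) / (n.choose r : ℝ)
      ≤ (exNum s (n - t) F : ℝ) / ((n - t).choose s : ℝ)
  rw [div_le_div_iff₀ hc1 hc2]
  have hid : n.choose t * (n - t).choose s = n.choose r * r.choose t := by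
    have := choose_identity n s t (by omega)
    rw [hst] at this
    exact this
  have key : exNum r n (suspend t F) * (n - t).choose s
      ≤ exNum s (n - t) F * n.choose r := by
    have hpos : 0 < r.choose t := Nat.choose_pos (by omega)
    apply Nat.le_of_mul_le_mul_right ?_ hpos
    calc exNum r n (suspend t F) * (n - t).choose s * r.choose t
        = (r.choose t * exNum r n (suspend t F)) * (n - t).choose s := by ring
      _ ≤ (n.choose t * exNum s (n - t) F) * (n - t).choose s := by
          apply Nat.mul_le_mul_right
          exact hnat
      _ = exNum s (n - t) F * (n.choose t * (n - t).choose s) := by ring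
      _ = exNum s (n - t) F * (n.choose r * r.choose t) := by rw [hid]
      _ = exNum s (n - t) F * n.choose r * r.choose t := by ring
  exact_mod_cast key

lemma hasCopy_congr {V A B : Type*} [DecidableEq V] [DecidableEq A] [DecidableEq B]
    (H : Finset (Finset V)) (F : Finset (Finset A)) (σ : A ≃ B) :
    HasCopy H (F.image fun e => e.image σ) ↔ HasCopy H F := by
  constructor
  · rintro ⟨ψ, hinj, hmap⟩
    refine ⟨ψ ∘ σ, ?_, ?_⟩
    · have hmem : ∀ z, z ∈ (⋃ e ∈ F, (e : Set A)) →
          (σ z) ∈ (⋃ e ∈ ((F.image fun e => e.image σ) : Finset (Finset B)), (e : Set B)) := by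
        intro z hz
        obtain ⟨e, he, hze⟩ := mem_supp.mp hz
        exact mem_supp.mpr ⟨e.image σ, Finset.mem_image_of_mem _ he,
          Finset.mem_image_of_mem _ hze⟩
      intro x hx y hy h
      exact σ.injective (hinj (hmem x hx) (hmem y hy) h)
    · intro e he
      have h2 : (e.image σ).image ψ ∈ H := hmap _ (Finset.mem_image_of_mem _ he)
      rwa [Finset.image_image] at h2
  · rintro ⟨ψ, hinj, hmap⟩
    refine ⟨ψ ∘ σ.symm, ?_, ?_⟩
    · have hmem : ∀ z, z ∈ (⋃ e ∈ ((F.image fun e => e.image σ) : Finset (Finset B)), (e : Set B)) →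
          σ.symm z ∈ (⋃ e ∈ F, (e : Set A)) := by
        intro z hz
        obtain ⟨e', he', hze⟩ := mem_supp.mp hz
        obtain ⟨e, he, rfl⟩ := Finset.mem_image.mp he'
        obtain ⟨u, hu, rfl⟩ := Finset.mem_image.mp hze
        rw [Equiv.symm_apply_apply]
        exact mem_supp.mpr ⟨e, he, hu⟩
      intro x hx y hy h
      exact σ.symm.injective (hinj (hmem x hx) (hmem y hy) h)
    · intro e' he'
      obtain ⟨e, he, rfl⟩ := Finset.mem_image.mp he'
      rw [Finset.image_image]
      have hcomp : ((ψ ∘ σ.symm) ∘ σ) = ψ := by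
        funext u; simp
      rw [hcomp]
      exact hmap e he

lemma exNum_congr {a b : ℕ} (σ : Fin a ≃ Fin b) (F : Finset (Finset (Fin a))) (r n : ℕ) :
    exNum r n (F.image fun e => e.image σ) = exNum r n F := by
  classical
  unfold exNum
  congr 1
  apply Finset.filter_congr
  intro H _
  rw [hasCopy_congr]

lemma turanDensity_congr {a b : ℕ} (σ : Fin a ≃ Fin b) (F : Finset (Finset (Fin a)))
    (r : ℕ) :
    turanDensity r (F.image fun e => e.image σ) = turanDensity r F := by
  unfold turanDensity
  congr 1
  funext n
  rw [exNum_congr]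

lemma mem_suspend_edge {m t : ℕ} (e : Finset (Fin m)) (x : Fin (m + t)) :
    (x ∈ e.image (Fin.castAdd t) ∪ Finset.univ.filter fun v : Fin (m + t) => m ≤ v.val)
      ↔ ((∃ u ∈ e, (u : ℕ) = (x : ℕ)) ∨ m ≤ (x : ℕ)) := by
  simp only [Finset.mem_union, Finset.mem_image, Finset.mem_filter, Finset.mem_univ, true_and]
  constructor
  · rintro (⟨u, hu, rfl⟩ | h)
    · exact Or.inl ⟨u, hu, rfl⟩
    · exact Or.inr h
  · rintro (⟨u, hu, hux⟩ | h)
    · exact Or.inl ⟨u, hu, Fin.ext hux⟩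
    · exact Or.inr h

lemma suspend_suspend {m : ℕ} (t₁ t₂ : ℕ) (F : Finset (Finset (Fin m))) :
    suspend t₂ (suspend t₁ F)
      = (suspend (t₁ + t₂) F).image fun e =>
          e.image (finCongr (show m + (t₁ + t₂) = m + t₁ + t₂ by omega)) := by
  unfold suspend
  rw [Finset.image_image, Finset.image_image]
  apply Finset.image_congr
  intro e _
  simp only [Function.comp_apply]
  ext x
  rw [mem_suspend_edge]
  have hx := x.isLt
  constructor
  · rintro (⟨y, hy, hyx⟩ | h)
    · rw [mem_suspend_edge] at hy
      have hyval : (y : ℕ) = (x : ℕ) := hyx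
      refine Finset.mem_image.mpr ⟨⟨(x : ℕ), by omega⟩, ?_, Fin.ext rfl⟩
      rw [mem_suspend_edge]
      rcases hy with ⟨u, hu, huy⟩ | hm
      · exact Or.inl ⟨u, hu, by simpa using (huy.trans hyval)⟩
      · exact Or.inr (by simpa using hyval ▸ hm)
    · refine Finset.mem_image.mpr ⟨⟨(x : ℕ), by omega⟩, ?_, Fin.ext rfl⟩
      rw [mem_suspend_edge]
      exact Or.inr (by simp; omega)
  · intro hmem
    obtain ⟨z, hz, rfl⟩ := Finset.mem_image.mp hmem
    rw [mem_suspend_edge] at hz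
    have hzval : ((finCongr (show m + (t₁ + t₂) = m + t₁ + t₂ by omega) z : Fin (m + t₁ + t₂)) : ℕ)
        = (z : ℕ) := rfl
    rcases hz with ⟨u, hu, huz⟩ | hm
    · have hum := u.isLt
      refine Or.inl ⟨⟨(z : ℕ), by omega⟩, ?_, hzval.symm⟩
      rw [mem_suspend_edge]
      exact Or.inl ⟨u, hu, by simpa using huz⟩
    · by_cases hsmall : (z : ℕ) < m + t₁
      · refine Or.inl ⟨⟨(z : ℕ), hsmall⟩, ?_, hzval.symm⟩
        rw [mem_suspend_edge]
        exact Or.inr (by simpa using hm)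
      · refine Or.inr ?_
        have hzz := z.isLt
        rw [hzval]
        omega

lemma card_cone (m t : ℕ) :
    (Finset.univ.filter fun v : Fin (m + t) => m ≤ v.val).card = t := by
  have heq : (Finset.univ.filter fun v : Fin (m + t) => m ≤ v.val)
      = Finset.univ.image fun j : Fin t =>
          (⟨m + j.val, by have := j.isLt; omega⟩ : Fin (m + t)) := by
    ext x
    simp only [Finset.mem_filter, Finset.mem_univ, true_and, Finset.mem_image]
    constructor
    · intro h
      have := x.isLt
      exact ⟨⟨x.val - m, by omega⟩, Fin.ext (show m + (x.val - m) = x.val by omega)⟩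
    · rintro ⟨j, rfl⟩
      exact Nat.le_add_right m j.val
  rw [heq, Finset.card_image_of_injective _ ?_, Finset.card_univ, Fintype.card_fin]
  intro a b hab
  have := congrArg Fin.val hab
  simp only at this
  exact Fin.ext (by omega)

lemma card_suspend_edge {m t s : ℕ} (F : Finset (Finset (Fin m)))
    (hunif : ∀ e ∈ F, e.card = s) :
    ∀ E ∈ suspend t F, E.card = s + t := by
  intro E hE
  simp only [suspend, Finset.mem_image] at hE
  obtain ⟨e, he, rfl⟩ := hE
  have hd : Disjoint (e.image (Fin.castAdd t))
      (Finset.univ.filter fun v : Fin (m + t) => m ≤ v.val) := by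
    rw [Finset.disjoint_left]
    intro x hx hx'
    obtain ⟨u, _, rfl⟩ := Finset.mem_image.mp hx
    have h1 := u.isLt
    have h2 := (Finset.mem_filter.mp hx').2
    simp only [Fin.coe_castAdd] at h2
    omega
  rw [Finset.card_union_of_disjoint hd,
    Finset.card_image_of_injective _ (Fin.castAdd_injective m t), hunif e he, card_cone]


end SuspAux

/-- For `r ≥ s ≥ 2` and an `s`-graph `F`, we have `π(F̂^r) ≤ π(F)`;
consequently `π(F̂^{r₂}) ≤ π(F̂^{r₁})` for all `r₂ ≥ r₁ ≥ s`. -/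
theorem suspension_turanDensity (s : ℕ) (hs : 2 ≤ s) {m : ℕ}
    (F : Finset (Finset (Fin m))) (hunif : ∀ e ∈ F, e.card = s) :
    (∀ r : ℕ, s ≤ r → turanDensity r (suspend (r - s) F) ≤ turanDensity s F) ∧
    (∀ r₁ r₂ : ℕ, s ≤ r₁ → r₁ ≤ r₂ →
      turanDensity r₂ (suspend (r₂ - s) F) ≤ turanDensity r₁ (suspend (r₁ - s) F)) := by
  constructor
  · intro r hr
    exact SuspAux.main_le F (by omega) hr
  · intro r₁ r₂ h1 h2
    have key := SuspAux.main_le (suspend (r₁ - s) F) (show 0 < r₁ by omega) h2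
    have heq : turanDensity r₂ (suspend (r₂ - r₁) (suspend (r₁ - s) F))
        = turanDensity r₂ (suspend (r₂ - s) F) := by
      rw [SuspAux.suspend_suspend, SuspAux.turanDensity_congr]
      rw [show (r₁ - s) + (r₂ - r₁) = r₂ - s from by omega]
    rwa [heq] at key
end

section
/- Let r ≥ 2 be an integer. An r-uniform hypergraph F with exactly three edges and minimum degree at least 2 (after removing isolated vertices) is isomorphic to the r-suspension T̂_{2i}^r of the expanded triangle T_{2i} for some integer i with 1 ≤ i ≤ ⌊r/2⌋; conversely, for every 1 ≤ i ≤ ⌊r/2⌋, the r-graph T̂_{2i}^r has exactly three edges and minimum degree at least 2. -/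
open Filter

/-!
Record for each vertex its Venn type, the set of edges containing it. Two families of edges
indexed by the same set are isomorphic as soon as every Venn region has the same size on both
sides. For three `r`-edges in which every vertex lies in at least two edges, only the three
pairwise regions and the triple region can be non-empty; the three edge sizes and the number `n`
of vertices give four linear equations for them, so each pairwise region has `n - r` vertices and
the triple region has `3r - 2n`. The suspension `T̂_{2i}^r` is such a hypergraph on `r + i`
vertices, so `F` is isomorphic to it for `i = n - r`; distinct edges force `i ≥ 1`, and
`3r - 2n ≥ 0` is `2i ≤ r`.
-/

open Finset

section Venn

variable {ι V W : Type*} [Fintype ι] [DecidableEq V] [DecidableEq W]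

def vennType (E : ι → Finset V) (v : V) : Finset ι := {j | v ∈ E j}

def vennFiber [DecidableEq ι] (E : ι → Finset V) (s : Finset ι) : Finset V :=
  {v ∈ univ.biUnion E | vennType E v = s}

@[simp]
lemma mem_vennType {E : ι → Finset V} {v : V} {j : ι} : j ∈ vennType E v ↔ v ∈ E j := by
  simp [vennType]

variable [DecidableEq ι]

lemma mem_vennFiber {E : ι → Finset V} {s : Finset ι} {v : V} :
    v ∈ vennFiber E s ↔ v ∈ univ.biUnion E ∧ vennType E v = s :=
  mem_filter

theorem exists_injOn_image_eq_of_card_vennFiber_eq [Nonempty W] (E : ι → Finset V)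
    (E' : ι → Finset W) (h : ∀ s, #(vennFiber E s) = #(vennFiber E' s)) :
    ∃ φ : V → W, Set.InjOn φ (univ.biUnion E) ∧ ∀ j, (E j).image φ = E' j := by
  have hbij : ∀ s, ∃ f : V → W, Set.BijOn f (vennFiber E s) (vennFiber E' s) := fun s =>
    (vennFiber E s).finite_toSet.exists_bijOn_of_encard_eq
      (by simp only [Set.encard_coe_eq_coe_finsetCard, h s])
  choose f hf using hbij
  have hmaps : ∀ v ∈ univ.biUnion E, vennType E' (f (vennType E v) v) = vennType E v :=
    fun v hv => (mem_vennFiber.1 ((hf _).mapsTo (mem_vennFiber.2 ⟨hv, rfl⟩))).2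
  refine ⟨fun v => f (vennType E v) v, fun u hu v hv huv => ?_, fun j => ?_⟩
  · simp only at huv
    have htype : vennType E u = vennType E v := by
      rw [← hmaps u hu, ← hmaps v hv, huv]
    rw [← htype] at huv
    exact (hf _).injOn (mem_vennFiber.2 ⟨hu, rfl⟩) (mem_vennFiber.2 ⟨hv, htype.symm⟩) huv
  ext w
  constructor
  · intro hw
    obtain ⟨v, hv, rfl⟩ := mem_image.1 hw
    rw [← mem_vennType, hmaps v (mem_biUnion.2 ⟨j, mem_univ j, hv⟩), mem_vennType]
    exact hv
  · intro hw
    have hwU : w ∈ univ.biUnion E' := mem_biUnion.2 ⟨j, mem_univ j, hw⟩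
    obtain ⟨v, hv, hvw⟩ := (hf (vennType E' w)).surjOn (mem_vennFiber.2 ⟨hwU, rfl⟩)
    obtain ⟨-, htype⟩ := mem_vennFiber.1 hv
    refine mem_image.2 ⟨v, ?_, by rw [htype, hvw]⟩
    rw [← mem_vennType, htype, mem_vennType]
    exact hw

lemma card_eq_sum_card_vennFiber (E : ι → Finset V) (j : ι) :
    #(E j) = ∑ s ∈ {s | j ∈ s}, #(vennFiber E s) := by
  rw [card_eq_sum_card_fiberwise (f := vennType E) (t := {s | j ∈ s})
    fun v hv => by simpa using hv]
  refine sum_congr rfl fun s hs => congrArg card (ext fun v => ?_)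
  rw [mem_filter, mem_vennFiber]
  refine ⟨fun ⟨hv, htype⟩ => ⟨mem_biUnion.2 ⟨j, mem_univ j, hv⟩, htype⟩,
    fun ⟨_, htype⟩ => ⟨?_, htype⟩⟩
  rw [← mem_vennType, htype]
  exact (mem_filter.1 hs).2

lemma card_biUnion_eq_sum_card_vennFiber (E : ι → Finset V) :
    #(univ.biUnion E) = ∑ s, #(vennFiber E s) :=
  card_eq_sum_card_fiberwise fun _ _ => mem_univ _

lemma vennFiber_eq_empty_of_card_lt {E : ι → Finset V} {k : ℕ}
    (hdeg : ∀ v ∈ univ.biUnion E, k ≤ #(vennType E v)) {s : Finset ι} (hs : #s < k) :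
    vennFiber E s = ∅ :=
  filter_eq_empty_iff.2 fun v hv htype => by have := hdeg v hv; rw [htype] at this; omega

end Venn

section ThreeEdges

variable {V W : Type*} [DecidableEq V] [DecidableEq W] {r : ℕ}

lemma card_eq_sum_card_vennFiber_of_two_le (E : Fin 3 → Finset V)
    (hdeg : ∀ v ∈ univ.biUnion E, 2 ≤ #(vennType E v)) :
    #(E 0) = #(vennFiber E {0, 1}) + #(vennFiber E {0, 2}) + #(vennFiber E {0, 1, 2}) ∧
    #(E 1) = #(vennFiber E {0, 1}) + #(vennFiber E {1, 2}) + #(vennFiber E {0, 1, 2}) ∧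
    #(E 2) = #(vennFiber E {0, 2}) + #(vennFiber E {1, 2}) + #(vennFiber E {0, 1, 2}) ∧
    #(univ.biUnion E) = #(vennFiber E {0, 1}) + #(vennFiber E {0, 2}) +
      #(vennFiber E {1, 2}) + #(vennFiber E {0, 1, 2}) := by
  have hsmall : ∀ s : Finset (Fin 3), #s < 2 → #(vennFiber E s) = 0 := fun s hs => by
    rw [vennFiber_eq_empty_of_card_lt hdeg hs, card_empty]
  rw [card_eq_sum_card_vennFiber E 0, card_eq_sum_card_vennFiber E 1,
    card_eq_sum_card_vennFiber E 2, card_biUnion_eq_sum_card_vennFiber,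
    show ({s | 0 ∈ s} : Finset (Finset (Fin 3))) = {{0}, {0, 1}, {0, 2}, {0, 1, 2}} by decide,
    show ({s | 1 ∈ s} : Finset (Finset (Fin 3))) = {{1}, {0, 1}, {1, 2}, {0, 1, 2}} by decide,
    show ({s | 2 ∈ s} : Finset (Finset (Fin 3))) = {{2}, {0, 2}, {1, 2}, {0, 1, 2}} by decide,
    show (univ : Finset (Finset (Fin 3))) =
      {∅, {0}, {1}, {2}, {0, 1}, {0, 2}, {1, 2}, {0, 1, 2}} by decide]
  simp (disch := decide) only [sum_insert, sum_singleton, hsmall]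
  omega

lemma two_mul_card_biUnion_le {E : Fin 3 → Finset V} (hcard : ∀ j, #(E j) = r)
    (hdeg : ∀ v ∈ univ.biUnion E, 2 ≤ #(vennType E v)) :
    2 * #(univ.biUnion E) ≤ 3 * r := by
  have := card_eq_sum_card_vennFiber_of_two_le E hdeg
  have := hcard 0; have := hcard 1; have := hcard 2
  omega

theorem card_vennFiber_eq_of_card_biUnion_eq {E : Fin 3 → Finset V} {E' : Fin 3 → Finset W}
    (hcard : ∀ j, #(E j) = r) (hcard' : ∀ j, #(E' j) = r)
    (hdeg : ∀ v ∈ univ.biUnion E, 2 ≤ #(vennType E v))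
    (hdeg' : ∀ w ∈ univ.biUnion E', 2 ≤ #(vennType E' w))
    (hU : #(univ.biUnion E) = #(univ.biUnion E')) (s : Finset (Fin 3)) :
    #(vennFiber E s) = #(vennFiber E' s) := by
  have hs : s ∈ ({∅, {0}, {1}, {2}, {0, 1}, {0, 2}, {1, 2}, {0, 1, 2}} :
      Finset (Finset (Fin 3))) := by
    revert s; decide
  have := card_eq_sum_card_vennFiber_of_two_le E hdeg
  have := card_eq_sum_card_vennFiber_of_two_le E' hdeg'
  have := hcard 0; have := hcard 1; have := hcard 2
  have := hcard' 0; have := hcard' 1; have := hcard' 2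
  simp only [mem_insert, mem_singleton] at hs
  rcases hs with rfl | rfl | rfl | rfl | rfl | rfl | rfl | rfl
  all_goals first
    | omega
    | rw [vennFiber_eq_empty_of_card_lt hdeg (by decide),
        vennFiber_eq_empty_of_card_lt hdeg' (by decide), card_empty, card_empty]

end ThreeEdges

lemma card_lt_card_biUnion {ι V : Type*} [Fintype ι] [DecidableEq V] {E : ι → Finset V}
    {j k : ι} (hne : E j ≠ E k) (hcard : #(E j) = #(E k)) : #(E j) < #(univ.biUnion E) := by
  by_contra! hle
  have hU : ∀ l, #(univ.biUnion E) ≤ #(E l) → E l = univ.biUnion E := fun l =>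
    eq_of_subset_of_card_le (subset_biUnion_of_mem E (mem_univ l))
  exact hne ((hU j hle).trans (hU k (hcard ▸ hle)).symm)

section Hypergraph

variable {V W : Type*} [DecidableEq V] [DecidableEq W]

lemma exists_injective_image_univ_eq {F : Finset V} {n : ℕ} (hF : #F = n) :
    ∃ E : Fin n → V, Function.Injective E ∧ univ.image E = F := by
  let e := (Fintype.equivFinOfCardEq (by rw [Fintype.card_coe, hF])).symm
  refine ⟨fun j => e j, Subtype.val_injective.comp e.injective, ext fun v => ?_⟩
  simp only [mem_image, mem_univ, true_and]
  exact ⟨fun ⟨j, hj⟩ => hj ▸ (e j).2, fun hv => ⟨e.symm ⟨v, hv⟩, by simp⟩⟩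

lemma hypDegree_image_univ {ι : Type*} [Fintype ι] {E : ι → Finset V}
    (hE : Function.Injective E) (v : V) : hypDegree (univ.image E) v = #(vennType E v) := by
  rw [hypDegree, filter_image, card_image_of_injective _ hE, vennType]

lemma isIsoTo_image_univ {ι : Type*} [Fintype ι] [DecidableEq ι] {E : ι → Finset V}
    {E' : ι → Finset W} {φ : V → W} (hφ : Set.InjOn φ (univ.biUnion E))
    (himage : ∀ j, (E j).image φ = E' j) : IsIsoTo (univ.image E) (univ.image E') := by
  refine ⟨φ, by simpa using hφ, ?_⟩
  rw [image_image]
  exact image_congr fun j _ => himage j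

theorem isIsoTo_of_card_biUnion_eq [Nonempty W] {r : ℕ} {E : Fin 3 → Finset V}
    {E' : Fin 3 → Finset W} (hcard : ∀ j, #(E j) = r) (hcard' : ∀ j, #(E' j) = r)
    (hdeg : ∀ v ∈ univ.biUnion E, 2 ≤ #(vennType E v))
    (hdeg' : ∀ w ∈ univ.biUnion E', 2 ≤ #(vennType E' w))
    (hU : #(univ.biUnion E) = #(univ.biUnion E')) :
    IsIsoTo (univ.image E) (univ.image E') :=
  have ⟨_, hφ, himage⟩ := exists_injOn_image_eq_of_card_vennFiber_eq E E'
    (card_vennFiber_eq_of_card_biUnion_eq hcard hcard' hdeg hdeg' hU)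
  isIsoTo_image_univ hφ himage

end Hypergraph

section SuspendedTriangle

lemma Fin.card_filter_val (n : ℕ) (p : ℕ → Prop) [DecidablePred p] :
    #{v : Fin n | p v} = #{x ∈ range n | p x} := by
  rw [← card_map Fin.valEmbedding]
  congr 1
  ext x
  simp only [Finset.mem_map, mem_filter, mem_univ, true_and, Fin.valEmbedding_apply, mem_range]
  constructor
  · rintro ⟨v, hv, rfl⟩
    exact ⟨v.isLt, hv⟩
  · exact fun ⟨hx, hp⟩ => ⟨⟨x, hx⟩, hp, rfl⟩

lemma Fin.card_filter_val_notMem_Ico {n a b : ℕ} (hab : a ≤ b) (hb : b ≤ n) :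
    #{v : Fin n | ¬(a ≤ v.val ∧ v.val < b)} = n - (b - a) := by
  rw [Fin.card_filter_val n fun x => ¬(a ≤ x ∧ x < b)]
  have hsplit : ({x ∈ range n | ¬(a ≤ x ∧ x < b)} : Finset ℕ) = range a ∪ Ico b n := by
    ext x; simp only [mem_filter, mem_range, mem_union, mem_Ico]; omega
  rw [hsplit, card_union_of_disjoint (disjoint_left.2 fun x hx hx' => by
    simp only [mem_range, mem_Ico] at hx hx'; omega), card_range, Nat.card_Ico]
  omega

-- The edge of `T̂_{2i}^r` avoiding the block `S_j = [j i, (j + 1) i)`; the vertices `≥ 3 i`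
-- form the cone.
def suspendedTriangleEdge (i t : ℕ) (j : Fin 3) : Finset (Fin (3 * i + t)) :=
  {v | ¬(j * i ≤ v.val ∧ v.val < (j + 1) * i)}

variable {i t : ℕ}

lemma mem_suspendedTriangleEdge {j : Fin 3} {v : Fin (3 * i + t)} :
    v ∈ suspendedTriangleEdge i t j ↔ ¬(j * i ≤ v.val ∧ v.val < (j + 1) * i) := by
  simp [suspendedTriangleEdge]

lemma mem_suspend_edge_iff {m : ℕ} (e : Finset (Fin m)) (v : Fin (m + t)) :
    v ∈ e.image (Fin.castAdd t) ∪ ({v | m ≤ v.val} : Finset (Fin (m + t))) ↔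
      ∀ h : v.val < m, ⟨v, h⟩ ∈ e := by
  simp only [mem_union, mem_image, mem_filter, mem_univ, true_and]
  constructor
  · rintro (⟨u, hu, rfl⟩ | hv) h
    · exact hu
    · omega
  · intro hv
    by_cases h : v.val < m
    · exact Or.inl ⟨⟨v, h⟩, hv h, rfl⟩
    · exact Or.inr (by omega)

lemma suspend_expTriangle (i t : ℕ) :
    suspend t (expTriangle i) = univ.image (suspendedTriangleEdge i t) := by
  rw [suspend, expTriangle, show (univ : Finset (Fin 3)) = {2, 0, 1} by decide]
  simp only [image_insert, image_singleton]
  refine congrArg₂ insert ?_ (congrArg₂ insert ?_ (congrArg singleton ?_)) <;> ext v <;>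
    rw [mem_suspend_edge_iff, mem_suspendedTriangleEdge] <;>
    simp only [mem_union, mem_filter, mem_univ, true_and, Fin.val_zero, Fin.val_one,
      Fin.val_two] <;>
    omega

lemma card_suspendedTriangleEdge (j : Fin 3) : #(suspendedTriangleEdge i t j) = 2 * i + t := by
  have hj : (j + 1) * i ≤ 3 * i := Nat.mul_le_mul_right i (show (j : ℕ) + 1 ≤ 3 from j.isLt)
  rw [suspendedTriangleEdge,
    Fin.card_filter_val_notMem_Ico (Nat.mul_le_mul_right i (Nat.le_add_right j 1)) (by omega),
    add_one_mul, Nat.add_sub_cancel_left]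
  omega

lemma suspendedTriangleEdge_injective (hi : 0 < i) :
    Function.Injective (suspendedTriangleEdge i t) := by
  intro j k hjk
  have hlt : j * i < (j + 1) * i := Nat.mul_lt_mul_of_pos_right (Nat.lt_succ_self j) hi
  have hj : (j + 1) * i ≤ 3 * i := Nat.mul_le_mul_right i (show (j : ℕ) + 1 ≤ 3 from j.isLt)
  have hv : (⟨j * i, by omega⟩ : Fin (3 * i + t)) ∉ suspendedTriangleEdge i t j := by
    simp [mem_suspendedTriangleEdge, hlt]
  rw [hjk, mem_suspendedTriangleEdge, not_not] at hv
  have hkj := Nat.le_of_mul_le_mul_right hv.1 hi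
  have hjk := Nat.lt_of_mul_lt_mul_right hv.2
  exact Fin.ext (by omega)

lemma two_le_card_vennType_suspendedTriangleEdge (v : Fin (3 * i + t)) :
    2 ≤ #(vennType (suspendedTriangleEdge i t) v) := by
  rw [vennType, card_filter, Fin.sum_univ_three]
  simp only [mem_suspendedTriangleEdge, Fin.val_zero, Fin.val_one, Fin.val_two]
  split_ifs <;> omega

lemma biUnion_suspendedTriangleEdge : univ.biUnion (suspendedTriangleEdge i t) = univ :=
  eq_univ_of_forall fun v => by
    have := two_le_card_vennType_suspendedTriangleEdge v
    obtain ⟨j, hj⟩ := card_pos.1 (by omega : 0 < #(vennType (suspendedTriangleEdge i t) v))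
    exact mem_biUnion.2 ⟨j, mem_univ j, mem_vennType.1 hj⟩

end SuspendedTriangle

theorem exists_isIsoTo_suspend_expTriangle {m r : ℕ} {F : Finset (Finset (Fin m))}
    (hF : ∀ e ∈ F, #e = r) (hF3 : #F = 3)
    (hdeg : ∀ v, (∃ e ∈ F, v ∈ e) → 2 ≤ hypDegree F v) :
    ∃ i, 1 ≤ i ∧ 2 * i ≤ r ∧ IsIsoTo F (suspend (r - 2 * i) (expTriangle i)) := by
  obtain ⟨E, hE, rfl⟩ := exists_injective_image_univ_eq hF3
  have hcard : ∀ j, #(E j) = r := fun j => hF _ (mem_image_of_mem E (mem_univ j))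
  have hdegE : ∀ v ∈ univ.biUnion E, 2 ≤ #(vennType E v) := fun v hv => by
    rw [← hypDegree_image_univ hE]
    exact hdeg v (by simpa using hv)
  have hlt : r < #(univ.biUnion E) := hcard 0 ▸ card_lt_card_biUnion
    (hE.ne (show (0 : Fin 3) ≠ 1 by decide)) ((hcard 0).trans (hcard 1).symm)
  have hle := two_mul_card_biUnion_le hcard hdegE
  set i := #(univ.biUnion E) - r with hi
  have : Nonempty (Fin (3 * i + (r - 2 * i))) := ⟨⟨0, by omega⟩⟩
  refine ⟨i, by omega, by omega, ?_⟩
  rw [suspend_expTriangle]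
  refine isIsoTo_of_card_biUnion_eq hcard (fun j => ?_) hdegE
    (fun v _ => two_le_card_vennType_suspendedTriangleEdge v) ?_
  · rw [card_suspendedTriangleEdge]
    omega
  · rw [biUnion_suspendedTriangleEdge, card_univ, Fintype.card_fin]
    omega

theorem describe_T2_general (r : ℕ) :
    (∀ (m : ℕ) (F : Finset (Finset (Fin m))),
      (∀ e ∈ F, e.card = r) → F.card = 3 →
      (∀ v, (∃ e ∈ F, v ∈ e) → 2 ≤ hypDegree F v) →
      ∃ i : ℕ, 1 ≤ i ∧ i ≤ r / 2 ∧ IsIsoTo F (suspend (r - 2 * i) (expTriangle i))) ∧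
    (∀ i : ℕ, 1 ≤ i → i ≤ r / 2 →
      (∀ e ∈ suspend (r - 2 * i) (expTriangle i), e.card = r) ∧
      (suspend (r - 2 * i) (expTriangle i)).card = 3 ∧
      (∀ v, (∃ e ∈ suspend (r - 2 * i) (expTriangle i), v ∈ e) →
        2 ≤ hypDegree (suspend (r - 2 * i) (expTriangle i)) v)) := by
  refine ⟨fun m F hF hF3 hdeg => ?_, fun i hi hir => ?_⟩
  · obtain ⟨i, hi, hir, hiso⟩ := exists_isIsoTo_suspend_expTriangle hF hF3 hdeg
    exact ⟨i, hi, by omega, hiso⟩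
  · have hinj := suspendedTriangleEdge_injective (t := r - 2 * i) hi
    rw [suspend_expTriangle]
    refine ⟨fun e he => ?_, ?_, fun v _ => ?_⟩
    · obtain ⟨j, -, rfl⟩ := mem_image.1 he
      rw [card_suspendedTriangleEdge]
      omega
    · rw [card_image_of_injective _ hinj, card_univ, Fintype.card_fin]
    · rw [hypDegree_image_univ hinj]
      exact two_le_card_vennType_suspendedTriangleEdge v

/-- For `r ≥ 2`: an `r`-graph with exactly three edges and minimum degree at
least `2` (over vertices of positive degree) is isomorphic to `T̂_{2i}^r` for
some `1 ≤ i ≤ ⌊r/2⌋`; conversely every such `T̂_{2i}^r` is an `r`-graph with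
exactly three edges and minimum degree at least `2`. -/
theorem describe_T2 (r : ℕ) (hr : 2 ≤ r) :
    (∀ (m : ℕ) (F : Finset (Finset (Fin m))),
      (∀ e ∈ F, e.card = r) → F.card = 3 →
      (∀ v, (∃ e ∈ F, v ∈ e) → 2 ≤ hypDegree F v) →
      ∃ i : ℕ, 1 ≤ i ∧ i ≤ r / 2 ∧ IsIsoTo F (suspend (r - 2 * i) (expTriangle i))) ∧
    (∀ i : ℕ, 1 ≤ i → i ≤ r / 2 →
      (∀ e ∈ suspend (r - 2 * i) (expTriangle i), e.card = r) ∧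
      (suspend (r - 2 * i) (expTriangle i)).card = 3 ∧
      (∀ v, (∃ e ∈ suspend (r - 2 * i) (expTriangle i), v ∈ e) →
        2 ≤ hypDegree (suspend (r - 2 * i) (expTriangle i)) v)) :=
  describe_T2_general r
end

section
/- Let r ≥ 3 be an integer and let F₁ be an r-uniform hypergraph with exactly three edges, no isolated vertices, and minimum degree exactly 1. Then there exists an r-uniform hypergraph F₂ with exactly three edges, minimum degree at least 2, and maximum degree equal to 3, such that there is a homomorphism from F₁ to F₂. -/
open Filter

set_option maxHeartbeats 4000000

section AuxHomMinDeg
open Finset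

def auxG1 (r : ℕ) : Finset ℕ := Finset.Ico 0 r
def auxG2 (t p r : ℕ) : Finset ℕ := Finset.Ico 0 (t+p) ∪ Finset.Ico r (r+p)
def auxG3 (t p r : ℕ) : Finset ℕ := Finset.Ico 0 t ∪ Finset.Ico (t+p) (r+p)


lemma aux_disjIco {a b c d : ℕ} (h : b ≤ c) : Disjoint (Finset.Ico a b) (Finset.Ico c d) := by
  rw [Finset.disjoint_left]
  intro x hx hx'
  simp only [Finset.mem_Ico] at hx hx'
  omega

lemma aux_exists_onto {m : ℕ} (s : Finset (Fin m)) (tg : Finset ℕ) (h : s.card = tg.card) :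
    ∃ ψ : Fin m → ℕ, s.image ψ = tg := by
  classical
  refine ⟨fun v => if hv : v ∈ s then (tg.equivFin.symm (Fin.cast h (s.equivFin ⟨v, hv⟩)) : ℕ) else 0, ?_⟩
  ext y
  simp only [Finset.mem_image]
  constructor
  · rintro ⟨v, hv, rfl⟩
    rw [dif_pos hv]
    exact (tg.equivFin.symm _).2
  · intro hy
    set x := s.equivFin.symm (Fin.cast h.symm (tg.equivFin ⟨y, hy⟩)) with hx
    refine ⟨x.1, x.2, ?_⟩
    rw [dif_pos x.2]
    have : (⟨x.1, x.2⟩ : {v // v ∈ s}) = x := rfl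
    rw [this, hx]
    simp

lemma aux_edge_split (a b c : Finset (Fin m)) :
    a = (a ∩ b ∩ c) ∪ ((a ∩ b) \ c) ∪ ((a ∩ c) \ b) ∪ (a \ (b ∪ c)) := by
  ext v
  simp only [Finset.mem_union, Finset.mem_inter, Finset.mem_sdiff]
  tauto

lemma aux_edge_card (a b c : Finset (Fin m)) :
    a.card = (a ∩ b ∩ c).card + ((a ∩ b) \ c).card + ((a ∩ c) \ b).card
      + (a \ (b ∪ c)).card := by
  conv_lhs => rw [aux_edge_split a b c]
  rw [Finset.card_union_of_disjoint, Finset.card_union_of_disjoint,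
    Finset.card_union_of_disjoint]
  · rw [Finset.disjoint_left]; intro x hx hx'
    simp only [Finset.mem_inter, Finset.mem_sdiff] at hx hx'; tauto
  · rw [Finset.disjoint_left]; intro x hx hx'
    simp only [Finset.mem_union, Finset.mem_inter, Finset.mem_sdiff] at hx hx'; tauto
  · rw [Finset.disjoint_left]; intro x hx hx'
    simp only [Finset.mem_union, Finset.mem_inter, Finset.mem_sdiff] at hx hx'; tauto

lemma aux_buildPhi {m : ℕ} (a b c : Finset (Fin m))
    (R3 Rab Rac Rbc RSa RSb RSc : Finset ℕ)
    (h3 : (a ∩ b ∩ c).card = R3.card)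
    (hab : ((a ∩ b) \ c).card = Rab.card)
    (hac : ((a ∩ c) \ b).card = Rac.card)
    (hbc : ((b ∩ c) \ a).card = Rbc.card)
    (hsa : (a \ (b ∪ c)).card = RSa.card)
    (hsb : (b \ (a ∪ c)).card = RSb.card)
    (hsc : (c \ (a ∪ b)).card = RSc.card) :
    ∃ φn : Fin m → ℕ,
      a.image φn = R3 ∪ Rab ∪ Rac ∪ RSa ∧
      b.image φn = R3 ∪ Rab ∪ Rbc ∪ RSb ∧
      c.image φn = R3 ∪ Rac ∪ Rbc ∪ RSc := by
  classical
  obtain ⟨ψ3, hψ3⟩ := aux_exists_onto (a ∩ b ∩ c) R3 h3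
  obtain ⟨ψab, hψab⟩ := aux_exists_onto ((a ∩ b) \ c) Rab hab
  obtain ⟨ψac, hψac⟩ := aux_exists_onto ((a ∩ c) \ b) Rac hac
  obtain ⟨ψbc, hψbc⟩ := aux_exists_onto ((b ∩ c) \ a) Rbc hbc
  obtain ⟨ψsa, hψsa⟩ := aux_exists_onto (a \ (b ∪ c)) RSa hsa
  obtain ⟨ψsb, hψsb⟩ := aux_exists_onto (b \ (a ∪ c)) RSb hsb
  obtain ⟨ψsc, hψsc⟩ := aux_exists_onto (c \ (a ∪ b)) RSc hsc
  refine ⟨fun v =>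
    if v ∈ a then
      if v ∈ b then (if v ∈ c then ψ3 v else ψab v)
      else (if v ∈ c then ψac v else ψsa v)
    else
      if v ∈ b then (if v ∈ c then ψbc v else ψsb v)
      else ψsc v, ?_, ?_, ?_⟩
  · conv_lhs => rw [aux_edge_split a b c]
    rw [Finset.image_union, Finset.image_union, Finset.image_union]
    rw [show ((a ∩ b ∩ c).image _) = (a ∩ b ∩ c).image ψ3 from Finset.image_congr
      (by intro v hv; simp only [Finset.coe_inter, Set.mem_inter_iff, Finset.mem_coe,
            Finset.mem_inter] at hv; simp [hv.1.1, hv.1.2, hv.2]), hψ3]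
    rw [show (((a ∩ b) \ c).image _) = ((a ∩ b) \ c).image ψab from Finset.image_congr
      (by intro v hv; simp only [Finset.coe_sdiff, Set.mem_diff, Finset.mem_coe,
            Finset.mem_inter, Finset.mem_sdiff] at hv
          simp [hv.1.1, hv.1.2, hv.2]), hψab]
    rw [show (((a ∩ c) \ b).image _) = ((a ∩ c) \ b).image ψac from Finset.image_congr
      (by intro v hv; simp only [Finset.coe_sdiff, Set.mem_diff, Finset.mem_coe,
            Finset.mem_inter, Finset.mem_sdiff] at hv
          simp [hv.1.1, hv.1.2, hv.2]), hψac]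
    rw [show ((a \ (b ∪ c)).image _) = (a \ (b ∪ c)).image ψsa from Finset.image_congr
      (by intro v hv; simp only [Finset.coe_sdiff, Set.mem_diff, Finset.mem_coe,
            Finset.mem_union, Finset.mem_sdiff] at hv
          push_neg at hv
          simp [hv.1, hv.2.1, hv.2.2]), hψsa]
  · conv_lhs => rw [aux_edge_split b a c]
    rw [Finset.image_union, Finset.image_union, Finset.image_union]
    rw [show b ∩ a ∩ c = a ∩ b ∩ c from by ext v; simp [Finset.mem_inter]; tauto]
    rw [show (b ∩ a) \ c = (a ∩ b) \ c from by
      ext v; simp [Finset.mem_inter, Finset.mem_sdiff]; tauto]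
    rw [show ((a ∩ b ∩ c).image _) = (a ∩ b ∩ c).image ψ3 from Finset.image_congr
      (by intro v hv; simp only [Finset.coe_inter, Set.mem_inter_iff, Finset.mem_coe,
            Finset.mem_inter] at hv; simp [hv.1.1, hv.1.2, hv.2]), hψ3]
    rw [show (((a ∩ b) \ c).image _) = ((a ∩ b) \ c).image ψab from Finset.image_congr
      (by intro v hv; simp only [Finset.coe_sdiff, Set.mem_diff, Finset.mem_coe,
            Finset.mem_inter, Finset.mem_sdiff] at hv
          simp [hv.1.1, hv.1.2, hv.2]), hψab]
    rw [show (((b ∩ c) \ a).image _) = ((b ∩ c) \ a).image ψbc from Finset.image_congr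
      (by intro v hv; simp only [Finset.coe_sdiff, Set.mem_diff, Finset.mem_coe,
            Finset.mem_inter, Finset.mem_sdiff] at hv
          simp [hv.1.1, hv.1.2, hv.2]), hψbc]
    rw [show ((b \ (a ∪ c)).image _) = (b \ (a ∪ c)).image ψsb from Finset.image_congr
      (by intro v hv; simp only [Finset.coe_sdiff, Set.mem_diff, Finset.mem_coe,
            Finset.mem_union, Finset.mem_sdiff] at hv
          push_neg at hv
          simp [hv.1, hv.2.1, hv.2.2]), hψsb]
  · conv_lhs => rw [aux_edge_split c a b]
    rw [Finset.image_union, Finset.image_union, Finset.image_union]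
    rw [show c ∩ a ∩ b = a ∩ b ∩ c from by ext v; simp [Finset.mem_inter]; tauto]
    rw [show (c ∩ a) \ b = (a ∩ c) \ b from by
      ext v; simp [Finset.mem_inter, Finset.mem_sdiff]; tauto]
    rw [show (c ∩ b) \ a = (b ∩ c) \ a from by
      ext v; simp [Finset.mem_inter, Finset.mem_sdiff]; tauto]
    rw [show ((a ∩ b ∩ c).image _) = (a ∩ b ∩ c).image ψ3 from Finset.image_congr
      (by intro v hv; simp only [Finset.coe_inter, Set.mem_inter_iff, Finset.mem_coe,
            Finset.mem_inter] at hv; simp [hv.1.1, hv.1.2, hv.2]), hψ3]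
    rw [show (((a ∩ c) \ b).image _) = ((a ∩ c) \ b).image ψac from Finset.image_congr
      (by intro v hv; simp only [Finset.coe_sdiff, Set.mem_diff, Finset.mem_coe,
            Finset.mem_inter, Finset.mem_sdiff] at hv
          simp [hv.1.1, hv.1.2, hv.2]), hψac]
    rw [show (((b ∩ c) \ a).image _) = ((b ∩ c) \ a).image ψbc from Finset.image_congr
      (by intro v hv; simp only [Finset.coe_sdiff, Set.mem_diff, Finset.mem_coe,
            Finset.mem_inter, Finset.mem_sdiff] at hv
          simp [hv.1.1, hv.1.2, hv.2]), hψbc]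
    rw [show ((c \ (a ∪ b)).image _) = (c \ (a ∪ b)).image ψsc from Finset.image_congr
      (by intro v hv; simp only [Finset.coe_sdiff, Set.mem_diff, Finset.mem_coe,
            Finset.mem_union, Finset.mem_sdiff] at hv
          push_neg at hv
          simp [hv.1, hv.2.1, hv.2.2]), hψsc]

lemma aux_final (r t p : ℕ) (ht : 1 ≤ t) (hp : 1 ≤ p) (htp : t + 2*p = r)
    {m : ℕ} (F₁ : Finset (Finset (Fin m)))
    (hhom : ∃ φn : Fin m → ℕ, ∀ e ∈ F₁,
      e.image φn = auxG1 r ∨ e.image φn = auxG2 t p r ∨ e.image φn = auxG3 t p r) :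
    ∃ (m₂ : ℕ) (F₂ : Finset (Finset (Fin m₂))),
      (∀ e ∈ F₂, e.card = r) ∧ F₂.card = 3 ∧
      (∀ v, (∃ e ∈ F₂, v ∈ e) → 2 ≤ hypDegree F₂ v) ∧
      (∀ v, hypDegree F₂ v ≤ 3) ∧ (∃ v, hypDegree F₂ v = 3) ∧
      ∃ φ : Fin m → Fin m₂, ∀ e ∈ F₁, e.image φ ∈ F₂ := by
  classical
  obtain ⟨φn, hφn⟩ := hhom
  have hn : 0 < r + p := by omega
  set Φ : ℕ → Fin (r+p) := fun x => ⟨x % (r+p), Nat.mod_lt x hn⟩ with hΦ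
  -- lift lemmas
  have memlift : ∀ (s : Finset ℕ), (∀ x ∈ s, x < r + p) → ∀ v : Fin (r+p),
      (v ∈ s.image Φ ↔ (v : ℕ) ∈ s) := by
    intro s hs v
    constructor
    · rintro hv
      obtain ⟨x, hx, rfl⟩ := Finset.mem_image.mp hv
      simpa [hΦ, Nat.mod_eq_of_lt (hs x hx)] using hx
    · intro hv
      refine Finset.mem_image.mpr ⟨(v : ℕ), hv, ?_⟩
      simp [hΦ, Nat.mod_eq_of_lt v.isLt]
  have cardlift : ∀ (s : Finset ℕ), (∀ x ∈ s, x < r + p) →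
      (s.image Φ).card = s.card := by
    intro s hs
    apply Finset.card_image_of_injOn
    intro x hx y hy hxy
    have : x % (r+p) = y % (r+p) := congrArg Fin.val hxy
    rwa [Nat.mod_eq_of_lt (hs x hx), Nat.mod_eq_of_lt (hs y hy)] at this
  have hb1 : ∀ x ∈ auxG1 r, x < r + p := by
    intro x hx; simp only [auxG1, Finset.mem_Ico] at hx; omega
  have hb2 : ∀ x ∈ auxG2 t p r, x < r + p := by
    intro x hx; simp only [auxG2, Finset.mem_union, Finset.mem_Ico] at hx; omega
  have hb3 : ∀ x ∈ auxG3 t p r, x < r + p := by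
    intro x hx; simp only [auxG3, Finset.mem_union, Finset.mem_Ico] at hx; omega
  set f1 : Finset (Fin (r+p)) := (auxG1 r).image Φ with hf1
  set f2 : Finset (Fin (r+p)) := (auxG2 t p r).image Φ with hf2
  set f3 : Finset (Fin (r+p)) := (auxG3 t p r).image Φ with hf3
  have hm1 : ∀ v : Fin (r+p), v ∈ f1 ↔ (v : ℕ) < r := by
    intro v; rw [hf1, memlift _ hb1]; simp [auxG1, Finset.mem_Ico]
  have hm2 : ∀ v : Fin (r+p), v ∈ f2 ↔ ((v:ℕ) < t + p ∨ (r ≤ (v:ℕ) ∧ (v:ℕ) < r + p)) := by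
    intro v; rw [hf2, memlift _ hb2]; simp [auxG2, Finset.mem_Ico, Finset.mem_union]
  have hm3 : ∀ v : Fin (r+p), v ∈ f3 ↔ ((v:ℕ) < t ∨ (t + p ≤ (v:ℕ) ∧ (v:ℕ) < r + p)) := by
    intro v; rw [hf3, memlift _ hb3]; simp [auxG3, Finset.mem_Ico, Finset.mem_union]
  have f12 : f1 ≠ f2 := by
    intro h
    have h1 : ((⟨r, by omega⟩ : Fin (r+p)) ∈ f2) := by rw [hm2]; right; simp; omega
    rw [← h, hm1] at h1; simp at h1
  have f13 : f1 ≠ f3 := by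
    intro h
    have h1 : ((⟨t, by omega⟩ : Fin (r+p)) ∈ f1) := by rw [hm1]; simp; omega
    rw [h, hm3] at h1; simp at h1; omega
  have f23 : f2 ≠ f3 := by
    intro h
    have h1 : ((⟨t, by omega⟩ : Fin (r+p)) ∈ f2) := by rw [hm2]; left; simp; omega
    rw [h, hm3] at h1; simp at h1; omega
  refine ⟨r + p, {f1, f2, f3}, ?_, ?_, ?_, ?_, ?_, ?_⟩
  · -- uniform
    intro e he
    simp only [Finset.mem_insert, Finset.mem_singleton] at he
    rcases he with rfl | rfl | rfl
    · rw [hf1, cardlift _ hb1]; simp [auxG1]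
    · rw [hf2, cardlift _ hb2, auxG2, Finset.card_union_of_disjoint (aux_disjIco (by omega)),
        Nat.card_Ico, Nat.card_Ico]; omega
    · rw [hf3, cardlift _ hb3, auxG3, Finset.card_union_of_disjoint (aux_disjIco (by omega)),
        Nat.card_Ico, Nat.card_Ico]; omega
  · -- card 3
    rw [Finset.card_insert_of_notMem (by simp [f12, f13]),
      Finset.card_insert_of_notMem (by simp [f23]), Finset.card_singleton]
  all_goals {
    have hdeg : ∀ v : Fin (r+p), hypDegree {f1, f2, f3} v =
        (if v ∈ f1 then 1 else 0) + (if v ∈ f2 then 1 else 0) + (if v ∈ f3 then 1 else 0) := by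
      intro v
      rw [hypDegree, Finset.card_filter,
        Finset.sum_insert (by simp [f12, f13]),
        Finset.sum_insert (by simp [f23]), Finset.sum_singleton]
      ring
    first
    | -- min degree
      (intro v _
       rw [hdeg v]
       have hv := v.isLt
       simp only [hm1, hm2, hm3]
       split_ifs <;> omega)
    | -- max degree
      (intro v
       rw [hdeg v]
       split_ifs <;> omega)
    | -- exists degree 3
      (refine ⟨⟨0, by omega⟩, ?_⟩
       rw [hdeg]
       rw [if_pos ((hm1 _).mpr (by simp; omega)), if_pos ((hm2 _).mpr (by left; simp; omega)),
         if_pos ((hm3 _).mpr (by left; simp; omega))])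
    | -- hom
      (refine ⟨fun v => Φ (φn v), ?_⟩
       intro e he
       have : e.image (fun v => Φ (φn v)) = (e.image φn).image Φ := by
         rw [Finset.image_image]; rfl
       rw [this]
       rcases hφn e he with h | h | h <;> rw [h] <;> simp [hf1, hf2, hf3])
  }

lemma aux_case1 {m : ℕ} (a b c : Finset (Fin m)) (r t p n3 xab xac xbc na nb nc : ℕ)
    (hp : 1 ≤ p) (htp : t + 2*p = r)
    (e3 : (a ∩ b ∩ c).card = n3)
    (eab : ((a ∩ b) \ c).card = xab)
    (eac : ((a ∩ c) \ b).card = xac)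
    (ebc : ((b ∩ c) \ a).card = xbc)
    (ea : (a \ (b ∪ c)).card = na)
    (eb : (b \ (a ∪ c)).card = nb)
    (ec : (c \ (a ∪ b)).card = nc)
    (ha : n3 + xab + xac + na = r)
    (hb : n3 + xab + xbc + nb = r)
    (hc : n3 + xac + xbc + nc = r)
    (hK : n3 + (xab - p) + (xac - p) + (xbc - p) ≤ t) :
    ∃ φn : Fin m → ℕ,
      a.image φn = auxG1 r ∧ b.image φn = auxG2 t p r ∧ c.image φn = auxG3 t p r := by
  classical
  set oab := xab - p with hoab
  set oac := xac - p with hoac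
  set obc := xbc - p with hobc
  set wab := xab - oab with hwab
  set wac := xac - oac with hwac
  set wbc := xbc - obc with hwbc
  set R3 : Finset ℕ := Finset.Ico 0 n3 with hR3
  set Rab : Finset ℕ := Finset.Ico n3 (n3+oab) ∪ Finset.Ico t (t+wab) with hRab
  set Rac : Finset ℕ := Finset.Ico (n3+oab) (n3+oab+oac) ∪ Finset.Ico (t+p) (t+p+wac) with hRac
  set Rbc : Finset ℕ := Finset.Ico (n3+oab+oac) (n3+oab+oac+obc)
      ∪ Finset.Ico (t+2*p) (t+2*p+wbc) with hRbc
  set RSa : Finset ℕ := auxG1 r \ (R3 ∪ Rab ∪ Rac) with hRSa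
  set RSb : Finset ℕ := auxG2 t p r \ (R3 ∪ Rab ∪ Rbc) with hRSb
  set RSc : Finset ℕ := auxG3 t p r \ (R3 ∪ Rac ∪ Rbc) with hRSc
  have hsub1 : R3 ∪ Rab ∪ Rac ⊆ auxG1 r := by
    intro x hx
    simp only [hR3, hRab, hRac, auxG1, Finset.mem_union, Finset.mem_Ico] at hx ⊢
    omega
  have hsub2 : R3 ∪ Rab ∪ Rbc ⊆ auxG2 t p r := by
    intro x hx
    simp only [hR3, hRab, hRbc, auxG2, Finset.mem_union, Finset.mem_Ico] at hx ⊢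
    omega
  have hsub3 : R3 ∪ Rac ∪ Rbc ⊆ auxG3 t p r := by
    intro x hx
    simp only [hR3, hRac, hRbc, auxG3, Finset.mem_union, Finset.mem_Ico] at hx ⊢
    omega
  have cardU1 : (R3 ∪ Rab ∪ Rac).card = n3 + xab + xac := by
    rw [show R3 ∪ Rab ∪ Rac = Finset.Ico 0 (n3+oab+oac)
        ∪ Finset.Ico t (t+wab) ∪ Finset.Ico (t+p) (t+p+wac) from by
      ext x
      simp only [hR3, hRab, hRac, Finset.mem_union, Finset.mem_Ico]
      omega]
    rw [Finset.card_union_of_disjoint, Finset.card_union_of_disjoint (aux_disjIco (by omega))]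
    · simp only [Nat.card_Ico]; omega
    · exact Finset.disjoint_union_left.mpr ⟨aux_disjIco (by omega), aux_disjIco (by omega)⟩
  have cardU2 : (R3 ∪ Rab ∪ Rbc).card = n3 + xab + xbc := by
    rw [show R3 ∪ Rab ∪ Rbc = Finset.Ico 0 (n3+oab)
        ∪ Finset.Ico (n3+oab+oac) (n3+oab+oac+obc)
        ∪ Finset.Ico t (t+wab) ∪ Finset.Ico (t+2*p) (t+2*p+wbc) from by
      ext x
      simp only [hR3, hRab, hRbc, Finset.mem_union, Finset.mem_Ico]
      omega]
    rw [Finset.card_union_of_disjoint, Finset.card_union_of_disjoint,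
      Finset.card_union_of_disjoint (aux_disjIco (by omega))]
    · simp only [Nat.card_Ico]; omega
    · exact Finset.disjoint_union_left.mpr ⟨aux_disjIco (by omega), aux_disjIco (by omega)⟩
    · exact Finset.disjoint_union_left.mpr
        ⟨Finset.disjoint_union_left.mpr ⟨aux_disjIco (by omega), aux_disjIco (by omega)⟩,
          aux_disjIco (by omega)⟩
  have cardU3 : (R3 ∪ Rac ∪ Rbc).card = n3 + xac + xbc := by
    rw [show R3 ∪ Rac ∪ Rbc = Finset.Ico 0 n3
        ∪ Finset.Ico (n3+oab) (n3+oab+oac+obc)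
        ∪ Finset.Ico (t+p) (t+p+wac) ∪ Finset.Ico (t+2*p) (t+2*p+wbc) from by
      ext x
      simp only [hR3, hRac, hRbc, Finset.mem_union, Finset.mem_Ico]
      omega]
    rw [Finset.card_union_of_disjoint, Finset.card_union_of_disjoint,
      Finset.card_union_of_disjoint (aux_disjIco (by omega))]
    · simp only [Nat.card_Ico]; omega
    · exact Finset.disjoint_union_left.mpr ⟨aux_disjIco (by omega), aux_disjIco (by omega)⟩
    · exact Finset.disjoint_union_left.mpr
        ⟨Finset.disjoint_union_left.mpr ⟨aux_disjIco (by omega), aux_disjIco (by omega)⟩,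
          aux_disjIco (by omega)⟩
  have cg1 : (auxG1 r).card = r := by simp [auxG1]
  have cg2 : (auxG2 t p r).card = r := by
    rw [auxG2, Finset.card_union_of_disjoint (aux_disjIco (by omega)), Nat.card_Ico, Nat.card_Ico]
    omega
  have cg3 : (auxG3 t p r).card = r := by
    rw [auxG3, Finset.card_union_of_disjoint (aux_disjIco (by omega)), Nat.card_Ico, Nat.card_Ico]
    omega
  obtain ⟨φn, h1, h2, h3⟩ := aux_buildPhi a b c R3 Rab Rac Rbc RSa RSb RSc
    (by rw [e3, hR3, Nat.card_Ico]; omega)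
    (by rw [eab, hRab, Finset.card_union_of_disjoint (aux_disjIco (by omega)),
        Nat.card_Ico, Nat.card_Ico]; omega)
    (by rw [eac, hRac, Finset.card_union_of_disjoint (aux_disjIco (by omega)),
        Nat.card_Ico, Nat.card_Ico]; omega)
    (by rw [ebc, hRbc, Finset.card_union_of_disjoint (aux_disjIco (by omega)),
        Nat.card_Ico, Nat.card_Ico]; omega)
    (by rw [ea, hRSa, Finset.card_sdiff_of_subset hsub1, cardU1, cg1]; omega)
    (by rw [eb, hRSb, Finset.card_sdiff_of_subset hsub2, cardU2, cg2]; omega)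
    (by rw [ec, hRSc, Finset.card_sdiff_of_subset hsub3, cardU3, cg3]; omega)
  refine ⟨φn, ?_, ?_, ?_⟩
  · rw [h1, hRSa, Finset.union_sdiff_of_subset hsub1]
  · rw [h2, hRSb, Finset.union_sdiff_of_subset hsub2]
  · rw [h3, hRSc, Finset.union_sdiff_of_subset hsub3]

lemma aux_case2 {m : ℕ} (a b c : Finset (Fin m)) (r n3 xab xac xbc na nb nc : ℕ)
    (hr : 3 ≤ r)
    (e3 : (a ∩ b ∩ c).card = n3)
    (eab : ((a ∩ b) \ c).card = xab)
    (eac : ((a ∩ c) \ b).card = xac)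
    (ebc : ((b ∩ c) \ a).card = xbc)
    (ea : (a \ (b ∪ c)).card = na)
    (eb : (b \ (a ∪ c)).card = nb)
    (ec : (c \ (a ∪ b)).card = nc)
    (ha : n3 + xab + xac + na = r)
    (hb : n3 + xab + xbc + nb = r)
    (hc : n3 + xac + xbc + nc = r)
    (h1 : xbc ≤ na) (h2 : 1 ≤ na) :
    ∃ φn : Fin m → ℕ,
      a.image φn = auxG2 (r-2) 1 r ∧ b.image φn = auxG1 r ∧ c.image φn = auxG1 r := by
  classical
  set R3 : Finset ℕ := Finset.Ico 0 n3 with hR3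
  set Rab : Finset ℕ := Finset.Ico n3 (n3+xab) with hRab
  set Rac : Finset ℕ := Finset.Ico (n3+xab) (n3+xab+xac) with hRac
  set Rbc : Finset ℕ := Finset.Ico (n3+xab+xac) (n3+xab+xac+xbc) with hRbc
  set RSa : Finset ℕ := auxG2 (r-2) 1 r \ (R3 ∪ Rab ∪ Rac) with hRSa
  set RSb : Finset ℕ := auxG1 r \ (R3 ∪ Rab ∪ Rbc) with hRSb
  set RSc : Finset ℕ := auxG1 r \ (R3 ∪ Rac ∪ Rbc) with hRSc
  have hsub1 : R3 ∪ Rab ∪ Rac ⊆ auxG2 (r-2) 1 r := by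
    intro x hx
    simp only [hR3, hRab, hRac, auxG2, Finset.mem_union, Finset.mem_Ico] at hx ⊢
    omega
  have hsub2 : R3 ∪ Rab ∪ Rbc ⊆ auxG1 r := by
    intro x hx
    simp only [hR3, hRab, hRbc, auxG1, Finset.mem_union, Finset.mem_Ico] at hx ⊢
    omega
  have hsub3 : R3 ∪ Rac ∪ Rbc ⊆ auxG1 r := by
    intro x hx
    simp only [hR3, hRac, hRbc, auxG1, Finset.mem_union, Finset.mem_Ico] at hx ⊢
    omega
  have cardU1 : (R3 ∪ Rab ∪ Rac).card = n3 + xab + xac := by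
    rw [show R3 ∪ Rab ∪ Rac = Finset.Ico 0 (n3+xab+xac) from by
      ext x
      simp only [hR3, hRab, hRac, Finset.mem_union, Finset.mem_Ico]
      omega]
    rw [Nat.card_Ico]; omega
  have cardU2 : (R3 ∪ Rab ∪ Rbc).card = n3 + xab + xbc := by
    rw [show R3 ∪ Rab ∪ Rbc = Finset.Ico 0 (n3+xab)
        ∪ Finset.Ico (n3+xab+xac) (n3+xab+xac+xbc) from by
      ext x
      simp only [hR3, hRab, hRbc, Finset.mem_union, Finset.mem_Ico]
      omega]
    rw [Finset.card_union_of_disjoint (aux_disjIco (by omega)), Nat.card_Ico, Nat.card_Ico]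
    omega
  have cardU3 : (R3 ∪ Rac ∪ Rbc).card = n3 + xac + xbc := by
    rw [show R3 ∪ Rac ∪ Rbc = Finset.Ico 0 n3
        ∪ Finset.Ico (n3+xab) (n3+xab+xac+xbc) from by
      ext x
      simp only [hR3, hRac, hRbc, Finset.mem_union, Finset.mem_Ico]
      omega]
    rw [Finset.card_union_of_disjoint (aux_disjIco (by omega)), Nat.card_Ico, Nat.card_Ico]
    omega
  have cg1 : (auxG1 r).card = r := by simp [auxG1]
  have cg2 : (auxG2 (r-2) 1 r).card = r := by
    rw [auxG2, Finset.card_union_of_disjoint (aux_disjIco (by omega)), Nat.card_Ico, Nat.card_Ico]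
    omega
  obtain ⟨φn, h1', h2', h3'⟩ := aux_buildPhi a b c R3 Rab Rac Rbc RSa RSb RSc
    (by rw [e3, hR3, Nat.card_Ico]; omega)
    (by rw [eab, hRab, Nat.card_Ico]; omega)
    (by rw [eac, hRac, Nat.card_Ico]; omega)
    (by rw [ebc, hRbc, Nat.card_Ico]; omega)
    (by rw [ea, hRSa, Finset.card_sdiff_of_subset hsub1, cardU1, cg2]; omega)
    (by rw [eb, hRSb, Finset.card_sdiff_of_subset hsub2, cardU2, cg1]; omega)
    (by rw [ec, hRSc, Finset.card_sdiff_of_subset hsub3, cardU3, cg1]; omega)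
  exact ⟨φn, by rw [h1', hRSa, Finset.union_sdiff_of_subset hsub1],
    by rw [h2', hRSb, Finset.union_sdiff_of_subset hsub2],
    by rw [h3', hRSc, Finset.union_sdiff_of_subset hsub3]⟩

end AuxHomMinDeg

/-- Every `r`-graph (`r ≥ 3`) with exactly three edges, no isolated vertices
and minimum degree exactly `1` admits a homomorphism to some `r`-graph with
exactly three edges, minimum degree at least `2` and maximum degree equal
to `3`. -/
theorem hom_to_min_deg_two_max_deg_three (r : ℕ) (hr : 3 ≤ r) {m : ℕ}
    (F₁ : Finset (Finset (Fin m)))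
    (hunif : ∀ e ∈ F₁, e.card = r) (hcard : F₁.card = 3)
    (hcover : ∀ v : Fin m, 1 ≤ hypDegree F₁ v)
    (hmin : ∃ v : Fin m, hypDegree F₁ v = 1) :
    ∃ (m₂ : ℕ) (F₂ : Finset (Finset (Fin m₂))),
      (∀ e ∈ F₂, e.card = r) ∧ F₂.card = 3 ∧
      (∀ v, (∃ e ∈ F₂, v ∈ e) → 2 ≤ hypDegree F₂ v) ∧
      (∀ v, hypDegree F₂ v ≤ 3) ∧ (∃ v, hypDegree F₂ v = 3) ∧
      ∃ φ : Fin m → Fin m₂, ∀ e ∈ F₁, e.image φ ∈ F₂ := by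
  classical
  obtain ⟨a, b, c, hne_ab, hne_ac, hne_bc, hF⟩ := Finset.card_eq_three.mp hcard
  have hamem : a ∈ F₁ := by rw [hF]; simp
  have hbmem : b ∈ F₁ := by rw [hF]; simp
  have hcmem : c ∈ F₁ := by rw [hF]; simp
  have hacard : a.card = r := hunif a hamem
  have hbcard : b.card = r := hunif b hbmem
  have hccard : c.card = r := hunif c hcmem
  have Ea := aux_edge_card a b c
  have Eb := aux_edge_card b a c
  have Ec := aux_edge_card c a b
  rw [show b ∩ a ∩ c = a ∩ b ∩ c from by ext v; simp; tauto,
    show (b ∩ a) \ c = (a ∩ b) \ c from by ext v; simp; tauto] at Eb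
  rw [show c ∩ a ∩ b = a ∩ b ∩ c from by ext v; simp; tauto,
    show (c ∩ a) \ b = (a ∩ c) \ b from by ext v; simp; tauto,
    show (c ∩ b) \ a = (b ∩ c) \ a from by ext v; simp; tauto] at Ec
  set n3 := (a ∩ b ∩ c).card with hn3
  set xab := ((a ∩ b) \ c).card with hxab
  set xac := ((a ∩ c) \ b).card with hxac
  set xbc := ((b ∩ c) \ a).card with hxbc
  set na := (a \ (b ∪ c)).card with hna
  set nb := (b \ (a ∪ c)).card with hnb
  set nc := (c \ (a ∪ b)).card with hnc
  rw [hacard] at Ea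
  rw [hbcard] at Eb
  rw [hccard] at Ec
  -- singles: at least one of na, nb, nc is positive
  obtain ⟨v, hv⟩ := hmin
  have hv' : (F₁.filter fun e => v ∈ e).card = 1 := hv
  have hpair : ∀ e1 e2 : Finset (Fin m), e1 ∈ F₁ → e2 ∈ F₁ → e1 ≠ e2 →
      v ∈ e1 → v ∈ e2 → False := by
    intro e1 e2 h1 h2 hne12 hv1 hv2
    have hsubs : ({e1, e2} : Finset (Finset (Fin m))) ⊆ F₁.filter (fun e => v ∈ e) := by
      intro x hx
      simp only [Finset.mem_insert, Finset.mem_singleton] at hx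
      rcases hx with rfl | rfl <;> exact Finset.mem_filter.mpr ⟨‹_›, ‹_›⟩
    have hle := Finset.card_le_card hsubs
    rw [Finset.card_insert_of_notMem (by simp [hne12]), Finset.card_singleton, hv'] at hle
    omega
  have hs : 1 ≤ na + nb + nc := by
    have hvm : ∃ e ∈ F₁, v ∈ e := by
      have hpos : 0 < (F₁.filter fun e => v ∈ e).card := by omega
      obtain ⟨e, he⟩ := Finset.card_pos.mp hpos
      exact ⟨e, (Finset.mem_filter.mp he).1, (Finset.mem_filter.mp he).2⟩
    by_cases va : v ∈ a <;> by_cases vb : v ∈ b <;> by_cases vc : v ∈ c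
    · exact absurd (hpair a b hamem hbmem hne_ab va vb) (by simp)
    · exact absurd (hpair a b hamem hbmem hne_ab va vb) (by simp)
    · exact absurd (hpair a c hamem hcmem hne_ac va vc) (by simp)
    · have : 1 ≤ na := Finset.card_pos.mpr ⟨v, by simp [va, vb, vc]⟩
      omega
    · exact absurd (hpair b c hbmem hcmem hne_bc vb vc) (by simp)
    · have : 1 ≤ nb := Finset.card_pos.mpr ⟨v, by simp [va, vb, vc]⟩
      omega
    · have : 1 ≤ nc := Finset.card_pos.mpr ⟨v, by simp [va, vb, vc]⟩
      omega
    · obtain ⟨e, he, hve⟩ := hvm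
      rw [hF] at he
      simp only [Finset.mem_insert, Finset.mem_singleton] at he
      rcases he with rfl | rfl | rfl <;> tauto
  by_cases hcase : (1 ≤ xab ∧ 1 ≤ xac) ∨ (1 ≤ xab ∧ 1 ≤ xbc) ∨ (1 ≤ xac ∧ 1 ≤ xbc)
  · -- case 1
    set p := min (max (min xab xac) (max (min xab xbc) (min xac xbc))) ((r-1)/2) with hpdef
    set t := r - 2*p with htdef
    have hp1 : 1 ≤ p := by omega
    have htp : t + 2*p = r := by omega
    have ht1 : 1 ≤ t := by omega
    have hK : n3 + (xab - p) + (xac - p) + (xbc - p) ≤ t := by omega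
    obtain ⟨φn, h1, h2, h3⟩ := aux_case1 a b c r t p n3 xab xac xbc na nb nc hp1 htp
      rfl rfl rfl rfl rfl rfl rfl (by omega) (by omega) (by omega) hK
    refine aux_final r t p ht1 hp1 htp F₁ ⟨φn, ?_⟩
    intro e he
    rw [hF] at he
    simp only [Finset.mem_insert, Finset.mem_singleton] at he
    rcases he with rfl | rfl | rfl
    · exact Or.inl h1
    · exact Or.inr (Or.inl h2)
    · exact Or.inr (Or.inr h3)
  · -- case 2: at least two of the x's vanish
    have hzz : (xab = 0 ∧ xac = 0) ∨ (xab = 0 ∧ xbc = 0) ∨ (xac = 0 ∧ xbc = 0) := by omega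
    have hfin : ∀ e ∈ F₁, e = a ∨ e = b ∨ e = c := by
      intro e he
      rw [hF] at he
      simpa using he
    rcases hzz with ⟨hz1, hz2⟩ | ⟨hz1, hz2⟩ | ⟨hz1, hz2⟩
    · obtain ⟨φn, h1, h2, h3⟩ := aux_case2 a b c r n3 xab xac xbc na nb nc hr
        rfl rfl rfl rfl rfl rfl rfl (by omega) (by omega) (by omega) (by omega) (by omega)
      refine aux_final r (r-2) 1 (by omega) (by omega) (by omega) F₁ ⟨φn, ?_⟩
      intro e he
      rcases hfin e he with rfl | rfl | rfl
      · exact Or.inr (Or.inl h1)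
      · exact Or.inl h2
      · exact Or.inl h3
    · obtain ⟨φn, h1, h2, h3⟩ := aux_case2 b a c r n3 xab xbc xac nb na nc hr
        (by rw [show b ∩ a ∩ c = a ∩ b ∩ c from by ext v; simp; tauto])
        (by rw [show (b ∩ a) \ c = (a ∩ b) \ c from by ext v; simp; tauto])
        (by exact hxbc.symm)
        (by exact hxac.symm)
        (by exact hnb.symm)
        (by exact hna.symm)
        (by rw [show c \ (b ∪ a) = c \ (a ∪ b) from by ext v; simp; tauto])
        (by omega) (by omega) (by omega) (by omega) (by omega)
      refine aux_final r (r-2) 1 (by omega) (by omega) (by omega) F₁ ⟨φn, ?_⟩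
      intro e he
      rcases hfin e he with rfl | rfl | rfl
      · exact Or.inl h2
      · exact Or.inr (Or.inl h1)
      · exact Or.inl h3
    · obtain ⟨φn, h1, h2, h3⟩ := aux_case2 c a b r n3 xac xbc xab nc na nb hr
        (by rw [show c ∩ a ∩ b = a ∩ b ∩ c from by ext v; simp; tauto])
        (by rw [show (c ∩ a) \ b = (a ∩ c) \ b from by ext v; simp; tauto])
        (by rw [show (c ∩ b) \ a = (b ∩ c) \ a from by ext v; simp; tauto])
        (by exact hxab.symm)
        (by exact hnc.symm)
        (by rw [show a \ (c ∪ b) = a \ (b ∪ c) from by ext v; simp; tauto])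
        (by rw [show b \ (c ∪ a) = b \ (a ∪ c) from by ext v; simp; tauto])
        (by omega) (by omega) (by omega) (by omega) (by omega)
      refine aux_final r (r-2) 1 (by omega) (by omega) (by omega) F₁ ⟨φn, ?_⟩
      intro e he
      rcases hfin e he with rfl | rfl | rfl
      · exact Or.inl h2
      · exact Or.inl h3
      · exact Or.inr (Or.inl h1)
end

section
/- Let r ≥ 2 be an integer and let F be an r-uniform hypergraph with exactly three edges, no isolated vertices, minimum degree exactly 1, and maximum degree exactly 2. Then there exist vertices x, y of F such that no edge of F contains both x and y, the degree of x is 1, and the degree of y is 2. -/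
open Filter

lemma deg3 {V : Type*} [DecidableEq V] (e f g : Finset V)
    (hef : e ≠ f) (heg : e ≠ g) (hfg : f ≠ g) (v : V) :
    hypDegree {e, f, g} v =
      (if v ∈ e then 1 else 0) + (if v ∈ f then 1 else 0) + (if v ∈ g then 1 else 0) := by
  rw [hypDegree, Finset.card_filter]
  rw [show ({e, f, g} : Finset (Finset V)) = insert e (insert f {g}) from rfl]
  rw [Finset.sum_insert (by simp [hef, heg]), Finset.sum_insert (by simp [hfg]),
    Finset.sum_singleton]
  ring

lemma keyLem {V : Type*} [DecidableEq V] (F : Finset (Finset V)) (x y : V) (e : Finset V)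
    (heF : e ∈ F) (hx : hypDegree F x = 1) (hxe : x ∈ e) (hy : y ∉ e) :
    ∀ e' ∈ F, ¬ (x ∈ e' ∧ y ∈ e') := by
  rintro e' he' ⟨hxe', hye'⟩
  obtain ⟨a, ha⟩ := Finset.card_eq_one.mp hx
  have h1 : e ∈ F.filter (fun e => x ∈ e) := Finset.mem_filter.mpr ⟨heF, hxe⟩
  have h2 : e' ∈ F.filter (fun e => x ∈ e) := Finset.mem_filter.mpr ⟨he', hxe'⟩
  rw [ha, Finset.mem_singleton] at h1 h2
  exact hy (h1 ▸ h2 ▸ hye')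

lemma auxInner {V : Type*} [DecidableEq V] (F : Finset (Finset V)) (e g : Finset V)
    (heg : e ≠ g) (hgF : g ∈ F)
    (hcards : e.card = g.card)
    (hcover : ∀ v, 1 ≤ hypDegree F v)
    (hmaxle : ∀ v, hypDegree F v ≤ 2)
    (hno : ∀ y, hypDegree F y = 2 → y ∈ e) :
    ∃ x ∈ g, hypDegree F x = 1 := by
  by_contra h
  push_neg at h
  have hsub : g ⊆ e := by
    intro v hv
    exact hno v (by have := hcover v; have := hmaxle v; have := h v hv; omega)
  exact heg (Finset.eq_of_subset_of_card_le hsub hcards.le).symm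

/-- In an `r`-graph (`r ≥ 2`) with exactly three edges, no isolated vertices,
minimum degree exactly `1` and maximum degree exactly `2`, there exist a
vertex `x` of degree `1` and a vertex `y` of degree `2` such that no edge
contains both `x` and `y`. -/
theorem exists_x_y_not_covered (r : ℕ) (hr : 2 ≤ r) {m : ℕ}
    (F : Finset (Finset (Fin m)))
    (hunif : ∀ e ∈ F, e.card = r) (hcard : F.card = 3)
    (hcover : ∀ v : Fin m, 1 ≤ hypDegree F v)
    (hmin : ∃ v : Fin m, hypDegree F v = 1)
    (hmaxle : ∀ v : Fin m, hypDegree F v ≤ 2)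
    (hmax : ∃ v : Fin m, hypDegree F v = 2) :
    ∃ x y : Fin m, hypDegree F x = 1 ∧ hypDegree F y = 2 ∧
      ∀ e ∈ F, ¬ (x ∈ e ∧ y ∈ e) := by
  obtain ⟨x0, hx0⟩ := hmin
  obtain ⟨y0, hy0⟩ := hmax
  -- the unique edge of x0
  have hx0' : (F.filter fun e => x0 ∈ e).card = 1 := hx0
  have hne : (F.filter fun e => x0 ∈ e).Nonempty := Finset.card_pos.mp (by omega)
  obtain ⟨e, he⟩ := hne
  rw [Finset.mem_filter] at he
  obtain ⟨heF, hx0e⟩ := he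
  by_cases hgood : ∃ y, hypDegree F y = 2 ∧ y ∉ e
  · obtain ⟨y, hy2, hye⟩ := hgood
    exact ⟨x0, y, hx0, hy2, keyLem F x0 y e heF hx0 hx0e hye⟩
  · push_neg at hgood
    have hno : ∀ y, hypDegree F y = 2 → y ∈ e := hgood
    -- get the other two edges
    have h2 : (F.erase e).card = 2 := by rw [Finset.card_erase_of_mem heF, hcard]
    obtain ⟨f, g, hfg, hFe⟩ := Finset.card_eq_two.mp h2
    have hfE : f ∈ F.erase e := by rw [hFe]; simp
    have hgE : g ∈ F.erase e := by rw [hFe]; simp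
    have hfF : f ∈ F := Finset.mem_of_mem_erase hfE
    have hgF : g ∈ F := Finset.mem_of_mem_erase hgE
    have hef : e ≠ f := by rintro rfl; exact Finset.notMem_erase e F hfE
    have heg : e ≠ g := by rintro rfl; exact Finset.notMem_erase e F hgE
    have hF : F = {e, f, g} := by
      rw [← Finset.insert_erase heF, hFe]
    have hdy : hypDegree F y0 =
        (if y0 ∈ e then 1 else 0) + (if y0 ∈ f then 1 else 0) + (if y0 ∈ g then 1 else 0) := by
      rw [hF]; exact deg3 e f g hef heg hfg y0
    have hy0e : y0 ∈ e := hno y0 hy0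
    rw [hy0, if_pos hy0e] at hdy
    by_cases hy0f : y0 ∈ f
    · -- y0 in e and f, not g; find deg-1 vertex in g
      have hy0g : y0 ∉ g := by rw [if_pos hy0f] at hdy; intro hh; rw [if_pos hh] at hdy; omega
      obtain ⟨x, hxg, hx1⟩ := auxInner F e g heg hgF
        (by rw [hunif e heF, hunif g hgF]) hcover hmaxle hno
      exact ⟨x, y0, hx1, hy0, keyLem F x y0 g hgF hx1 hxg hy0g⟩
    · have hy0g : y0 ∈ g := by
        rw [if_neg hy0f] at hdy; by_contra hh; rw [if_neg hh] at hdy; omega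
      obtain ⟨x, hxf, hx1⟩ := auxInner F e f hef hfF
        (by rw [hunif e heF, hunif f hfF]) hcover hmaxle hno
      have hy0fn : y0 ∉ f := hy0f
      exact ⟨x, y0, hx1, hy0, keyLem F x y0 f hfF hx1 hxf hy0fn⟩
end

section
/- For all positive integers r and i satisfying r ≥ 2i, the Turán density of the r-suspension of the expanded triangle T_{2i} satisfies π(T̂_{2i}^r) ≤ i/r. -/
open Filter

/-!
Let `H` be an `r`-graph on `n` vertices with no copy of `T̂ = T̂_{2i}^r`, and let `d(D)` be the
number of edges containing an `(r - i)`-set `D`. Fix an edge `e` and an `i`-set `W`. The `i`-sets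
`B ⊆ e` such that `W` misses `e \ B` and `(e \ B) ∪ W` is an edge pairwise intersect: for disjoint
`B₁, B₂`, the edges `e`, `(e \ B₁) ∪ W`, `(e \ B₂) ∪ W` form a copy of `T̂` with cone
`e \ (B₁ ∪ B₂)`. By Erdős–Ko–Rado there are at most `C(r-1, i-1)` such `B`, hence
`∑_{D ⊆ e} d(D) ≤ C(n,i) C(r-1,i-1)` for every edge, that is `∑_D d(D)² ≤ |H| C(n,i) C(r-1,i-1)`.
As `∑_D d(D) = |H| C(r,i)`, Cauchy–Schwarz gives `|H| / C(n,r) ≤ (i/r) C(n,r-i) / C(n-i,r-i)`, and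
the last ratio tends to `1`. The density itself exists because `ex(n,F) / C(n,r)` is non-increasing
in `n ≥ r`: averaging over the `n + 1` vertex deletions of an extremal graph on `n + 1` vertices.
-/

open Finset Topology

theorem image_filter_eq_toFinset_of_getElem? {α : Type*} [DecidableEq α] {N lo hi : ℕ}
    {f : Fin N → α} {L L₁ M L₂ : List α} (hL : L₁ ++ M ++ L₂ = L)
    (hf : ∀ v : Fin N, L[v.val]? = some (f v))
    (hlo : L₁.length = lo) (hhi : lo + M.length = hi) (hN : hi ≤ N) :
    ({v | lo ≤ v.val ∧ v.val < hi} : Finset (Fin N)).image f = M.toFinset := by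
  subst hL hlo hhi
  ext x
  simp only [mem_image, mem_filter, mem_univ, true_and, List.mem_toFinset, List.mem_iff_getElem?]
  constructor
  · rintro ⟨v, ⟨hv₁, hv₂⟩, rfl⟩
    refine ⟨v - L₁.length, ?_⟩
    rw [← hf v, List.append_assoc, List.getElem?_append_right hv₁,
      List.getElem?_append_left (by omega)]
  · rintro ⟨j, hj⟩
    have hjM : j < M.length := (List.getElem?_eq_some_iff.mp hj).1
    refine ⟨⟨L₁.length + j, by omega⟩, by simp [hjM], Option.some_injective _ ?_⟩
    rw [← hf, ← hj, List.append_assoc, List.getElem?_append_right (by simp),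
      List.getElem?_append_left (by simpa)]
    simp

theorem erdos_ko_rado_of_forall_subset {α : Type*} [DecidableEq α] {s : Finset α}
    {𝒜 : Finset (Finset α)} {k : ℕ} (h𝒜s : ∀ A ∈ 𝒜, A ⊆ s)
    (h𝒜 : (𝒜 : Set (Finset α)).Intersecting) (hk𝒜 : (𝒜 : Set (Finset α)).Sized k)
    (hk : k ≤ #s / 2) :
    #𝒜 ≤ (#s - 1).choose (k - 1) := by
  let f : Fin #s ↪ α := s.equivFin.symm.toEmbedding.trans (Function.Embedding.subtype _)
  have hf : univ.map f = s := by simp [f, ← Finset.map_map, Finset.attach_map_val]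
  let ℬ : Finset (Finset (Fin #s)) := {B | B.map f ∈ 𝒜}
  have h𝒜ℬ : 𝒜 ⊆ ℬ.map (mapEmbedding f).toEmbedding := by
    intro A hA
    obtain ⟨B, -, rfl⟩ := subset_map_iff.mp (hf ▸ h𝒜s A hA)
    exact mem_map_of_mem _ (by simpa [ℬ] using hA)
  have hℬ : (ℬ : Set (Finset (Fin #s))).Intersecting := fun B₁ h₁ B₂ h₂ hdisj =>
    h𝒜 (mem_filter.mp h₁).2 (mem_filter.mp h₂).2 (disjoint_map f |>.mpr hdisj)
  have hkℬ : (ℬ : Set (Finset (Fin #s))).Sized k := fun B hB => by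
    simpa using hk𝒜 (mem_filter.mp hB).2
  calc #𝒜 ≤ #ℬ := (card_le_card h𝒜ℬ).trans_eq (card_map _)
    _ ≤ _ := erdos_ko_rado hℬ hkℬ hk

theorem Finset.sum_powersetCard_sdiff {α β : Type*} [DecidableEq α] [AddCommMonoid β]
    {s : Finset α} {k : ℕ} (hk : k ≤ #s) (f : Finset α → β) :
    ∑ B ∈ s.powersetCard k, f (s \ B) = ∑ D ∈ s.powersetCard (#s - k), f D := by
  refine sum_nbij' (s \ ·) (s \ ·) (fun B hB => ?_) (fun D hD => ?_) (fun B hB => ?_)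
    (fun D hD => ?_) (fun _ _ => rfl)
  · obtain ⟨hBs, hBk⟩ := mem_powersetCard.mp hB
    simp [sdiff_subset, card_sdiff_of_subset hBs, hBk]
  · obtain ⟨hDs, hDk⟩ := mem_powersetCard.mp hD
    simp [sdiff_subset, card_sdiff_of_subset hDs, hDk]; omega
  · exact sdiff_sdiff_eq_self (mem_powersetCard.mp hB).1
  · exact sdiff_sdiff_eq_self (mem_powersetCard.mp hD).1

theorem HasCopy.of_injective {V U W : Type*} [DecidableEq V] [DecidableEq U]
    {H : Finset (Finset V)} {G : Finset (Finset U)} {F : Finset (Finset W)} {g : V → U}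
    (hg : Function.Injective g) (hHG : ∀ e ∈ H, e.image g ∈ G) (hH : HasCopy H F) :
    HasCopy G F := by
  obtain ⟨φ, hφ, hφH⟩ := hH
  refine ⟨g ∘ φ, hg.injOn.comp hφ (Set.mapsTo_univ _ _), fun e he => ?_⟩
  rw [← image_image]
  exact hHG _ (hφH e he)

section TuranNumber

variable {r m : ℕ} {F : Finset (Finset (Fin m))}

theorem exNum_le_iff {n N : ℕ} :
    exNum r n F ≤ N ↔
      ∀ H : Finset (Finset (Fin n)), (∀ e ∈ H, #e = r) → ¬ HasCopy H F → #H ≤ N := by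
  simp [exNum]

theorem exNum_mul_le_of_forall {n c N : ℕ}
    (h : ∀ H : Finset (Finset (Fin n)), (∀ e ∈ H, #e = r) → ¬ HasCopy H F → #H * c ≤ N) :
    exNum r n F * c ≤ N := by
  rcases c.eq_zero_or_pos with rfl | hc
  · simp
  exact (Nat.le_div_iff_mul_le hc).mp
    (exNum_le_iff.mpr fun H hH hfree => (Nat.le_div_iff_mul_le hc).mpr (h H hH hfree))

theorem card_le_exNum {n : ℕ} {H : Finset (Finset (Fin n))} (hH : ∀ e ∈ H, #e = r)
    (hfree : ¬ HasCopy H F) : #H ≤ exNum r n F :=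
  exNum_le_iff.mp le_rfl H hH hfree

theorem card_filter_notMem_le_exNum {n : ℕ} {H : Finset (Finset (Fin (n + 1)))}
    (hH : ∀ e ∈ H, #e = r) (hfree : ¬ HasCopy H F) (v : Fin (n + 1)) :
    #{e ∈ H | v ∉ e} ≤ exNum r n F := by
  let H' : Finset (Finset (Fin n)) := {f | f.image v.succAbove ∈ H}
  have hsub : {e ∈ H | v ∉ e} ⊆ H'.image (image v.succAbove) := by
    intro e he
    obtain ⟨heH, hve⟩ := mem_filter.mp he
    have : e ⊆ univ.image v.succAbove := by
      rw [Fin.image_succAbove_univ]; intro x hx; simpa using ne_of_mem_of_not_mem hx hve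
    obtain ⟨f, -, rfl⟩ := subset_image_iff.mp this
    exact mem_image_of_mem _ (by simpa [H'] using heH)
  have hH' : ∀ f ∈ H', #f = r := fun f hf => by
    rw [← card_image_of_injective f Fin.succAbove_right_injective]
    exact hH _ (mem_filter.mp hf).2
  have hfree' : ¬ HasCopy H' F := fun hcopy =>
    hfree (hcopy.of_injective Fin.succAbove_right_injective fun f hf => (mem_filter.mp hf).2)
  exact (card_le_card hsub).trans (card_image_le.trans (card_le_exNum hH' hfree'))

theorem exNum_succ_mul_le (n : ℕ) : exNum r (n + 1) F * (n + 1 - r) ≤ (n + 1) * exNum r n F := by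
  refine exNum_mul_le_of_forall fun H hH hfree => ?_
  calc #H * (n + 1 - r) = ∑ e ∈ H, #{v ∈ (univ : Finset (Fin (n + 1))) | v ∉ e} := by
        rw [sum_const_nat fun e he => by rw [filter_notMem_eq_sdiff, card_sdiff_of_subset
          (subset_univ _), card_univ, Fintype.card_fin, hH e he]]
    _ = ∑ v : Fin (n + 1), #{e ∈ H | v ∉ e} :=
        (sum_card_bipartiteAbove_eq_sum_card_bipartiteBelow _).symm
    _ ≤ ∑ _v : Fin (n + 1), exNum r n F :=
        sum_le_sum fun v _ => card_filter_notMem_le_exNum hH hfree v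
    _ = (n + 1) * exNum r n F := by simp

theorem exNum_div_choose_succ_le {n : ℕ} (hn : r ≤ n) :
    (exNum r (n + 1) F : ℝ) / (n + 1).choose r ≤ exNum r n F / n.choose r := by
  have hchoose := Nat.choose_mul_succ_eq n r
  have hpos : 0 < n + 1 - r := by omega
  rw [div_le_div_iff₀ (by exact_mod_cast Nat.choose_pos (by omega))
    (by exact_mod_cast Nat.choose_pos hn)]
  refine mod_cast Nat.le_of_mul_le_mul_right ?_ hpos
  calc exNum r (n + 1) F * n.choose r * (n + 1 - r)
      = exNum r (n + 1) F * (n + 1 - r) * n.choose r := by ring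
    _ ≤ (n + 1) * exNum r n F * n.choose r := Nat.mul_le_mul_right _ (exNum_succ_mul_le n)
    _ = exNum r n F * ((n + 1).choose r * (n + 1 - r)) := by rw [← hchoose]; ring
    _ = exNum r n F * (n + 1).choose r * (n + 1 - r) := by ring

theorem tendsto_turanDensity (r : ℕ) (F : Finset (Finset (Fin m))) :
    Tendsto (fun n => (exNum r n F : ℝ) / n.choose r) atTop (𝓝 (turanDensity r F)) := by
  set a : ℕ → ℝ := fun n => (exNum r n F : ℝ) / n.choose r
  have hanti : Antitone fun n => a (n + r) :=
    antitone_nat_of_succ_le fun n => by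
      simpa [a, Nat.add_right_comm n 1 r] using exNum_div_choose_succ_le (F := F) (n := n + r)
        (by omega)
  have hlim := (tendsto_add_atTop_iff_nat r).mp
    (tendsto_atTop_ciInf hanti ⟨0, Set.forall_mem_range.mpr fun n => by positivity⟩)
  rwa [turanDensity, hlim.limUnder_eq]

end TuranNumber

theorem hasCopy_suspend_expTriangle {V : Type*} [DecidableEq V] {H : Finset (Finset V)}
    {i t : ℕ} {A B W C : Finset V} (hA : #A = i) (hB : #B = i) (hW : #W = i) (hC : #C = t)
    (hcard : #(A ∪ B ∪ W ∪ C) = 3 * i + t)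
    (hAB : A ∪ B ∪ C ∈ H) (hBW : B ∪ W ∪ C ∈ H) (hWA : W ∪ A ∪ C ∈ H) :
    HasCopy H (suspend t (expTriangle i)) := by
  -- `φ` lists `A`, `B`, `W`, `C` on the consecutive blocks `S 0`, `S 1`, `S 2` of
  -- `expTriangle i` and the cone `{v | 3 * i ≤ v}` of the suspension.
  set L := A.toList ++ B.toList ++ W.toList ++ C.toList with hL
  have hlen : L.length = 3 * i + t := by simp [L, hA, hB, hW, hC]; ring
  let φ : Fin (3 * i + t) → V := fun v => L[v.val]'(by rw [hlen]; exact v.isLt)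
  have hφ : ∀ v, L[v.val]? = some (φ v) := fun v => List.getElem?_eq_getElem _
  have hφC : ∀ v : Fin (3 * i), L[v.val]? = some ((φ ∘ Fin.castAdd t) v) :=
    fun v => hφ (Fin.castAdd t v)
  have himA := image_filter_eq_toFinset_of_getElem? (L₁ := []) (M := A.toList)
    (L₂ := B.toList ++ W.toList ++ C.toList) (by simp [L]) hφC
    (lo := 0 * i) (hi := (0 + 1) * i) (by simp) (by simp [hA]) (by omega)
  have himB := image_filter_eq_toFinset_of_getElem? (L₁ := A.toList) (M := B.toList)
    (L₂ := W.toList ++ C.toList) (by simp [L]) hφC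
    (lo := 1 * i) (hi := (1 + 1) * i) (by simp [hA]) (by simp [hB]; ring) (by omega)
  have himW := image_filter_eq_toFinset_of_getElem? (L₁ := A.toList ++ B.toList)
    (M := W.toList) (L₂ := C.toList) rfl hφC
    (lo := 2 * i) (hi := (2 + 1) * i) (by simp [hA, hB]; ring) (by simp [hW]; ring) le_rfl
  have himC := image_filter_eq_toFinset_of_getElem? (M := C.toList) (L₂ := [])
    (List.append_nil _) hφ
    (lo := 3 * i) (hi := 3 * i + t) (by simp [hA, hB, hW]; ring) (by simp [hC]) le_rfl
  have himL := image_filter_eq_toFinset_of_getElem? (L₁ := []) (M := L) (L₂ := []) (by simp) hφ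
    (lo := 0) (hi := 3 * i + t) rfl (by simp [hlen]) le_rfl
  have hcone : (univ.filter fun v : Fin (3 * i + t) => 3 * i ≤ v.val) =
      univ.filter fun v => 3 * i ≤ v.val ∧ v.val < 3 * i + t := by
    ext v; simp
  have hall : (univ.filter fun v : Fin (3 * i + t) => 0 ≤ v.val ∧ v.val < 3 * i + t) = univ := by
    ext v; simp
  simp only [toList_toFinset] at himA himB himW himC
  refine ⟨φ, ?_, ?_⟩
  · refine (injOn_of_card_image_eq (s := univ) ?_).mono (by simp)
    rw [← hall, himL, hL]
    simpa [List.toFinset_append, ← union_assoc] using hcard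
  · intro e he
    simp only [suspend, expTriangle, mem_image, mem_insert, mem_singleton] at he
    obtain ⟨s, hs, rfl⟩ := he
    rcases hs with rfl | rfl | rfl <;>
      simp only [image_union, image_image, hcone, himA, himB, himW, himC]
    · exact hAB
    · exact hBW
    · exact hWA

section Codegree

variable {V : Type*} [Fintype V] [DecidableEq V] {H : Finset (Finset V)} {r : ℕ}

def codegree (H : Finset (Finset V)) (D : Finset V) : ℕ := #{e ∈ H | D ⊆ e}

theorem filter_powersetCard_univ_subset (e : Finset V) (k : ℕ) :
    {D ∈ powersetCard k (univ : Finset V) | D ⊆ e} = e.powersetCard k := by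
  ext D; simp [mem_powersetCard, and_comm]

theorem sum_codegree (hH : (H : Set (Finset V)).Sized r) (k : ℕ) :
    ∑ D ∈ powersetCard k univ, codegree H D = #H * r.choose k := by
  calc ∑ D ∈ powersetCard k univ, codegree H D
      = ∑ e ∈ H, #{D ∈ powersetCard k univ | D ⊆ e} :=
        sum_card_bipartiteAbove_eq_sum_card_bipartiteBelow _
    _ = #H * r.choose k := by
        rw [sum_const_nat fun e he => by rw [filter_powersetCard_univ_subset, card_powersetCard,
          hH he]]

theorem sum_codegree_sq (k : ℕ) :
    ∑ D ∈ powersetCard k univ, codegree H D ^ 2 =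
      ∑ e ∈ H, ∑ D ∈ e.powersetCard k, codegree H D := by
  calc ∑ D ∈ powersetCard k univ, codegree H D ^ 2
      = ∑ D ∈ powersetCard k univ, ∑ _e ∈ H.bipartiteAbove (· ⊆ ·) D, codegree H D := by
        simp [sq, codegree, bipartiteAbove]
    _ = ∑ e ∈ H, ∑ D ∈ e.powersetCard k, codegree H D := by
        rw [sum_sum_bipartiteAbove_eq_sum_sum_bipartiteBelow]
        simp [bipartiteBelow, filter_powersetCard_univ_subset]

end Codegree

section ExpandedTriangleFree

variable {V : Type*} [DecidableEq V] {H : Finset (Finset V)} {r i : ℕ}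

theorem intersecting_of_not_hasCopy (hH : (H : Set (Finset V)).Sized r)
    (hfree : ¬ HasCopy H (suspend (r - 2 * i) (expTriangle i))) {e W : Finset V} (he : e ∈ H)
    (hW : #W = i) :
    (({B ∈ e.powersetCard i | Disjoint W (e \ B) ∧ e \ B ∪ W ∈ H} : Finset (Finset V)) :
      Set (Finset V)).Intersecting := by
  intro B₁ h₁ B₂ h₂ hB₁₂
  simp only [coe_filter, mem_powersetCard, Set.mem_ofPred_eq] at h₁ h₂
  obtain ⟨⟨hB₁e, hB₁⟩, hWB₁, hH₁⟩ := h₁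
  obtain ⟨⟨hB₂e, hB₂⟩, hWB₂, hH₂⟩ := h₂
  have hmem : ∀ x, (x ∈ B₁ → x ∈ e) ∧ (x ∈ B₂ → x ∈ e) ∧ (x ∈ B₁ → x ∉ B₂) ∧
      (x ∈ W → x ∈ e → x ∈ B₁) ∧ (x ∈ W → x ∈ e → x ∈ B₂) := fun x =>
    ⟨(hB₁e ·), (hB₂e ·), (disjoint_left.mp hB₁₂ ·),
      fun hW he => by_contra fun h => disjoint_left.mp hWB₁ hW (Finset.mem_sdiff.mpr ⟨he, h⟩),
      fun hW he => by_contra fun h => disjoint_left.mp hWB₂ hW (Finset.mem_sdiff.mpr ⟨he, h⟩)⟩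
  have hWe : Disjoint W e := disjoint_left.mpr fun x hxW hxe => by
    have := hmem x; tauto
  have hunion : B₁ ∪ B₂ ∪ W ∪ e \ (B₁ ∪ B₂) = e ∪ W := by
    ext x; have := hmem x; simp only [mem_union, Finset.mem_sdiff]; grind
  have h2i : i + i ≤ r := by
    have := card_le_card (union_subset hB₁e hB₂e)
    rwa [card_union_of_disjoint hB₁₂, hB₁, hB₂, hH he] at this
  have hedge₂ : B₂ ∪ W ∪ e \ (B₁ ∪ B₂) = e \ B₁ ∪ W := by
    ext x; have := hmem x; simp only [mem_union, Finset.mem_sdiff]; grind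
  have hedge₃ : W ∪ B₁ ∪ e \ (B₁ ∪ B₂) = e \ B₂ ∪ W := by
    ext x; have := hmem x; simp only [mem_union, Finset.mem_sdiff]; grind
  refine hfree (hasCopy_suspend_expTriangle (C := e \ (B₁ ∪ B₂)) hB₁ hB₂ hW ?_ ?_ ?_ ?_ ?_)
  · rw [card_sdiff_of_subset (union_subset hB₁e hB₂e), card_union_of_disjoint hB₁₂, hH he, hB₁,
      hB₂, two_mul]
  · rw [hunion, card_union_of_disjoint hWe.symm, hH he, hW]; omega
  · rwa [union_sdiff_of_subset (union_subset hB₁e hB₂e)]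
  · rwa [hedge₂]
  · rwa [hedge₃]

variable [Fintype V]

theorem codegree_le_card_filter_disjoint (hH : (H : Set (Finset V)).Sized r) {D : Finset V}
    (hD : #D + i = r) :
    codegree H D ≤ #{W ∈ powersetCard i univ | Disjoint W D ∧ D ∪ W ∈ H} := by
  refine card_le_card_of_injOn (· \ D) (fun f hf => ?_) (fun f₁ hf₁ f₂ hf₂ h => ?_)
  · obtain ⟨hfH, hDf⟩ := mem_filter.mp hf
    simp only [coe_filter, mem_powersetCard, Set.mem_ofPred_eq, subset_univ, true_and]
    refine ⟨?_, sdiff_disjoint, by rwa [union_sdiff_of_subset hDf]⟩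
    rw [card_sdiff_of_subset hDf, hH hfH]; omega
  · rw [← union_sdiff_of_subset (mem_filter.mp hf₁).2,
      ← union_sdiff_of_subset (mem_filter.mp hf₂).2]
    exact congrArg (D ∪ ·) h

theorem sum_codegree_sdiff_le (hr : 2 * i ≤ r) (hH : (H : Set (Finset V)).Sized r)
    (hfree : ¬ HasCopy H (suspend (r - 2 * i) (expTriangle i))) {e : Finset V} (he : e ∈ H) :
    ∑ B ∈ e.powersetCard i, codegree H (e \ B) ≤
      (Fintype.card V).choose i * (r - 1).choose (i - 1) := by
  calc ∑ B ∈ e.powersetCard i, codegree H (e \ B)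
      ≤ ∑ B ∈ e.powersetCard i,
          #{W ∈ powersetCard i univ | Disjoint W (e \ B) ∧ e \ B ∪ W ∈ H} := by
        refine sum_le_sum fun B hB => codegree_le_card_filter_disjoint hH ?_
        obtain ⟨hBe, hB⟩ := mem_powersetCard.mp hB
        rw [card_sdiff_of_subset hBe, hH he, hB]; omega
    _ = ∑ W ∈ powersetCard i univ,
          #{B ∈ e.powersetCard i | Disjoint W (e \ B) ∧ e \ B ∪ W ∈ H} :=
        sum_card_bipartiteAbove_eq_sum_card_bipartiteBelow _
    _ ≤ ∑ _W ∈ powersetCard i (univ : Finset V), (r - 1).choose (i - 1) := by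
        refine sum_le_sum fun W hW => ?_
        have := erdos_ko_rado_of_forall_subset (s := e) (k := i)
          (fun B hB => (mem_powersetCard.mp (mem_filter.mp hB).1).1)
          (intersecting_of_not_hasCopy hH hfree he (mem_powersetCard.mp hW).2)
          (fun B hB => (mem_powersetCard.mp (mem_filter.mp hB).1).2)
          (by rw [hH he]; omega)
        rwa [hH he] at this
    _ = (Fintype.card V).choose i * (r - 1).choose (i - 1) := by
        rw [sum_const, card_powersetCard, card_univ, smul_eq_mul]

theorem card_mul_choose_sq_le (hr : 2 * i ≤ r) (hH : (H : Set (Finset V)).Sized r)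
    (hfree : ¬ HasCopy H (suspend (r - 2 * i) (expTriangle i))) :
    #H * r.choose i ^ 2 ≤
      (Fintype.card V).choose (r - i) * ((Fintype.card V).choose i * (r - 1).choose (i - 1)) := by
  set M := (Fintype.card V).choose i * (r - 1).choose (i - 1)
  have hsum : ∑ D ∈ powersetCard (r - i) univ, codegree H D = #H * r.choose i := by
    rw [sum_codegree hH, Nat.choose_symm (by omega)]
  have hsq : ∑ D ∈ powersetCard (r - i) univ, codegree H D ^ 2 ≤ #H * M := by
    rw [sum_codegree_sq, ← smul_eq_mul, ← sum_const]
    refine sum_le_sum fun e he => ?_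
    rw [← hH he, ← sum_powersetCard_sdiff (by rw [hH he]; omega)]
    exact sum_codegree_sdiff_le hr hH hfree he
  have hCS := sq_sum_le_card_mul_sum_sq (s := powersetCard (r - i) (univ : Finset V))
    (f := codegree H)
  rw [hsum, card_powersetCard, card_univ] at hCS
  rcases (#H).eq_zero_or_pos with hH0 | hHpos
  · simp [hH0]
  · refine Nat.le_of_mul_le_mul_left ?_ hHpos
    calc #H * (#H * r.choose i ^ 2) = (#H * r.choose i) ^ 2 := by ring
      _ ≤ (Fintype.card V).choose (r - i) * (#H * M) := hCS.trans (Nat.mul_le_mul_left _ hsq)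
      _ = #H * ((Fintype.card V).choose (r - i) * M) := by ring

end ExpandedTriangleFree

theorem exNum_mul_choose_sq_le {r i : ℕ} (hr : 2 * i ≤ r) (n : ℕ) :
    exNum r n (suspend (r - 2 * i) (expTriangle i)) * r.choose i ^ 2 ≤
      n.choose (r - i) * (n.choose i * (r - 1).choose (i - 1)) :=
  exNum_mul_le_of_forall fun H hH hfree => by
    simpa using card_mul_choose_sq_le hr (fun e he => hH e he) hfree

theorem exNum_div_choose_le {r i n : ℕ} (hi : 1 ≤ i) (hr : 2 * i ≤ r) (hn : r ≤ n) :
    (exNum r n (suspend (r - 2 * i) (expTriangle i)) : ℝ) / n.choose r ≤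
      i / r * (n.choose (r - i) / (n - i).choose (r - i)) := by
  set a := exNum r n (suspend (r - 2 * i) (expTriangle i))
  have hr' : r * (r - 1).choose (i - 1) = i * r.choose i := by
    have := Nat.add_one_mul_choose_eq (r - 1) (i - 1)
    rwa [Nat.sub_add_cancel (by omega), Nat.sub_add_cancel hi, mul_comm _ i] at this
  have hn' : n.choose i * (n - i).choose (r - i) = n.choose r * r.choose i :=
    (Nat.choose_mul (by omega : i ≤ r)).symm
  have key : a * (r * (n - i).choose (r - i)) ≤ i * n.choose (r - i) * n.choose r := by
    refine Nat.le_of_mul_le_mul_right ?_ (pow_pos (Nat.choose_pos (by omega : i ≤ r)) 2)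
    calc a * (r * (n - i).choose (r - i)) * r.choose i ^ 2
        = a * r.choose i ^ 2 * (r * (n - i).choose (r - i)) := by ring
      _ ≤ n.choose (r - i) * (n.choose i * (r - 1).choose (i - 1)) *
            (r * (n - i).choose (r - i)) :=
          Nat.mul_le_mul_right _ (exNum_mul_choose_sq_le hr n)
      _ = n.choose (r - i) * (r * (r - 1).choose (i - 1)) *
            (n.choose i * (n - i).choose (r - i)) := by ring
      _ = i * n.choose (r - i) * n.choose r * r.choose i ^ 2 := by rw [hr', hn']; ring
  have hnr : (0 : ℝ) < n.choose r := by exact_mod_cast Nat.choose_pos hn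
  have hni : (0 : ℝ) < (n - i).choose (r - i) := by exact_mod_cast Nat.choose_pos (by omega)
  have hr0 : (0 : ℝ) < r := by exact_mod_cast (by omega : 0 < r)
  rw [div_mul_div_comm, div_le_div_iff₀ hnr (mul_pos hr0 hni)]
  exact_mod_cast key

theorem tendsto_sub_div_sub_atTop (a b : ℝ) :
    Tendsto (fun n : ℕ => ((n : ℝ) - a) / (n - b)) atTop (𝓝 1) := by
  have h : ∀ c : ℝ, Tendsto (fun n : ℕ => 1 - c / n) atTop (𝓝 1) := fun c => by
    simpa using tendsto_const_nhds.sub (tendsto_const_div_atTop_nhds_zero_nat c)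
  have hdiv := (h a).div (h b) one_ne_zero
  rw [div_one] at hdiv
  refine hdiv.congr' ?_
  filter_upwards [eventually_ne_atTop 0] with n hn
  have hn' : (n : ℝ) ≠ 0 := Nat.cast_ne_zero.mpr hn
  rw [Pi.div_apply, one_sub_div hn', one_sub_div hn', div_div_div_cancel_right₀ hn']

theorem tendsto_choose_div_choose_sub (k i : ℕ) :
    Tendsto (fun n : ℕ => (n.choose k : ℝ) / (n - i).choose k) atTop (𝓝 1) := by
  have hprod : Tendsto (fun n : ℕ => ∏ j ∈ range k, ((n : ℝ) - j) / (n - (i + j : ℕ)))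
      atTop (𝓝 1) := by
    simpa using tendsto_finsetProd (range k) fun j _ => tendsto_sub_div_sub_atTop j (i + j : ℕ)
  refine hprod.congr' ?_
  filter_upwards [eventually_ge_atTop (i + k)] with n hn
  symm
  have hdesc : ∀ m : ℕ, (m.choose k : ℝ) = m.descFactorial k / k.factorial := fun m => by
    rw [Nat.descFactorial_eq_factorial_mul_choose]; push_cast
    field_simp
  rw [hdesc, hdesc, div_div_div_cancel_right₀ (by positivity), Nat.descFactorial_eq_prod_range,
    Nat.descFactorial_eq_prod_range, Nat.cast_prod, Nat.cast_prod, ← prod_div_distrib]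
  refine prod_congr rfl fun j hj => ?_
  have := mem_range.mp hj
  rw [Nat.cast_sub (by omega), Nat.cast_sub (by omega), Nat.cast_sub (by omega), Nat.cast_add]
  ring

/-- For positive integers `r` and `i` with `r ≥ 2i`,
`π(T̂_{2i}^r) ≤ i / r`. -/
theorem turanDensity_susp_le (r i : ℕ) (hi : 1 ≤ i) (hr : 2 * i ≤ r) :
    turanDensity r (suspend (r - 2 * i) (expTriangle i)) ≤ (i : ℝ) / (r : ℝ) := by
  have hbound : Tendsto (fun n : ℕ => (i / r : ℝ) * (n.choose (r - i) / (n - i).choose (r - i)))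
      atTop (𝓝 (i / r)) := by
    simpa using (tendsto_choose_div_choose_sub (r - i) i).const_mul ((i : ℝ) / r)
  exact le_of_tendsto_of_tendsto (tendsto_turanDensity r _) hbound
    (eventually_atTop.mpr ⟨r, fun n hn => exNum_div_choose_le hi hr hn⟩)
end
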